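/- arXiv:0908.2984 — 13 statements merged into one kernel-verified Lean document; each statement's English description precedes it below -/
import Mathlib

section
/- Let V be a B-dimensional vector space over a finite field F_q with B = kα, and suppose each of d nodes stores a subspace of V. If a failed node stores an α-dimensional subspace W, and the subspaces stored by any k-1 of the d helper nodes together with W span at most a space of dimension (k-1)α + α with W intersecting the span of any k-1 helper subspaces trivially beyond what is forced, then the total number of symbols downloaded dβ for exact regeneration of W (where each helper contributes a β-dimensional subspace of its stored subspace) satisfies dβ ≥ α + (k-1)β. -/
lemma finrank_biSup_le {F V : Type*} [Field F] [AddCommGroup V] [Module F V]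
    [FiniteDimensional F V] {ι : Type*} [Fintype ι] {β : ℕ}
    (P : ι → Submodule F V) (hPdim : ∀ i, Module.finrank F (P i) = β)
    (T : Finset ι) :
    Module.finrank F (⨆ i ∈ T, P i : Submodule F V) ≤ T.card * β := by
  classical
  induction T using Finset.induction_on with
  | empty => simp
  | @insert a s ha ih =>
    rw [Finset.iSup_insert, Finset.card_insert_of_notMem ha]
    calc Module.finrank F (P a ⊔ ⨆ i ∈ s, P i : Submodule F V)
        ≤ Module.finrank F (P a) + Module.finrank F (⨆ i ∈ s, P i : Submodule F V) :=
          Submodule.finrank_add_le_finrank_add_finrank _ _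
      _ ≤ β + s.card * β := by rw [hPdim a]; omega
      _ = (s.card + 1) * β := by ring

/-- Repair-bandwidth lower bound `dβ ≥ α + (k-1)β` for exact regeneration. -/
theorem statement0 {F V : Type*} [Field F] [Fintype F] [AddCommGroup V] [Module F V]
    [FiniteDimensional F V]
    (B k α β d : ℕ) (hB : B = k * α) (hdim : Module.finrank F V = B)
    (hk : 1 ≤ k) (hkd : k - 1 ≤ d)
    (S : Fin d → Submodule F V) (P : Fin d → Submodule F V)
    (hPS : ∀ i, P i ≤ S i) (hPdim : ∀ i, Module.finrank F (P i) = β)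
    (W : Submodule F V) (hW : Module.finrank F W = α)
    (hindep : ∀ T : Finset (Fin d), T.card = k - 1 → W ⊓ (⨆ i ∈ T, S i) = ⊥)
    (hregen : W ≤ ⨆ i, P i) :
    α + (k - 1) * β ≤ d * β := by
  classical
  obtain ⟨T, -, hT⟩ := Finset.exists_subset_card_eq (s := (Finset.univ : Finset (Fin d)))
    (n := k - 1) (by simpa using hkd)
  set QT : Submodule F V := ⨆ i ∈ T, P i with hQT
  set QC : Submodule F V := ⨆ i ∈ Tᶜ, P i with hQC
  -- the full downloaded space splits
  have hsplit : (⨆ i, P i) = QT ⊔ QC := by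
    rw [hQT, hQC, ← Finset.iSup_union, Finset.union_compl]
    simp
  -- W is disjoint from QT
  have hdisj : W ⊓ QT = ⊥ := by
    have hle : QT ≤ ⨆ i ∈ T, S i := by
      apply iSup_mono fun i => iSup_mono fun _ => hPS i
    have := hindep T hT
    exact le_bot_iff.mp (le_trans (inf_le_inf_left W hle) this.le)
  -- finrank (W ⊔ QT) = α + finrank QT
  have hsum : Module.finrank F (W ⊔ QT : Submodule F V)
      = α + Module.finrank F QT := by
    have := Submodule.finrank_sup_add_finrank_inf_eq W QT
    rw [hdisj] at this
    simp only [finrank_bot] at this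
    omega
  -- W ⊔ QT ≤ QT ⊔ QC
  have hle2 : W ⊔ QT ≤ QT ⊔ QC := by
    apply sup_le
    · exact le_trans hregen hsplit.le
    · exact le_sup_left
  have h1 : α + Module.finrank F QT ≤ Module.finrank F QT + Module.finrank F QC := by
    calc α + Module.finrank F QT = Module.finrank F (W ⊔ QT : Submodule F V) := hsum.symm
      _ ≤ Module.finrank F (QT ⊔ QC : Submodule F V) := Submodule.finrank_mono hle2
      _ ≤ _ := Submodule.finrank_add_le_finrank_add_finrank _ _
  have hα : α ≤ Module.finrank F QC := by omega
  have hQCle : Module.finrank F QC ≤ (d - (k - 1)) * β := by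
    have := finrank_biSup_le P hPdim Tᶜ
    rwa [Finset.card_compl, hT, Fintype.card_fin] at this
  have hd : (d - (k - 1)) + (k - 1) = d := Nat.sub_add_cancel hkd
  calc α + (k - 1) * β ≤ (d - (k - 1)) * β + (k - 1) * β := by
        have := le_trans hα hQCle; omega
    _ = ((d - (k - 1)) + (k - 1)) * β := by ring
    _ = d * β := by rw [hd]
end

section
/- Let α = k = 3 and let Ψ be a 3×3 matrix over F_7 all of whose square submatrices are invertible, with rows ψ^{(4)}, ψ^{(5)}, ψ^{(6)}. Define for m = 4,5,6 the 3×9 matrix G^{(m)} whose row i, partitioned into three 3-vectors (g^{(m)}_{i1}, g^{(m)}_{i2}, g^{(m)}_{i3}), satisfies g^{(m)}_{ij} = 2ψ^{(m)} if i = j and g^{(m)}_{ij} = ψ^{(m)}_j e_i if i ≠ j. Then the 9×9 matrix formed by stacking G^{(4)}, G^{(5)}, G^{(6)} is invertible over F_7. -/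
private lemma two_ne_zero7 : (2 : ZMod 7) ≠ 0 := by decide
private lemma three_ne_zero7 : (3 : ZMod 7) ≠ 0 := by decide

/-- Explicit `k = α = 3` code over `F₇`: the `9 × 9` matrix obtained by stacking the three
non-systematic node matrices `G⁽⁴⁾, G⁽⁵⁾, G⁽⁶⁾` is invertible.  Row `(m,i)`, column `(j,t)`
holds `2ψ⁽ᵐ⁾ₜ` if `i = j`, and `(ψ⁽ᵐ⁾ⱼ eᵢ)ₜ` otherwise. -/
theorem statement3 (Ψ : Matrix (Fin 3) (Fin 3) (ZMod 7))
    (hΨ : ∀ (r : ℕ) (f : Fin r → Fin 3) (g : Fin r → Fin 3),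
      Function.Injective f → Function.Injective g → IsUnit (Ψ.submatrix f g).det) :
    IsUnit (Matrix.det (Matrix.of fun p q : Fin 3 × Fin 3 =>
      if p.2 = q.1 then 2 * Ψ p.1 q.2
      else if q.2 = p.2 then Ψ p.1 q.1 else 0)) := by
  set M : Matrix (Fin 3 × Fin 3) (Fin 3 × Fin 3) (ZMod 7) :=
    Matrix.of fun p q : Fin 3 × Fin 3 =>
      if p.2 = q.1 then 2 * Ψ p.1 q.2
      else if q.2 = p.2 then Ψ p.1 q.1 else 0 with hM
  have hΨdet : IsUnit Ψ.det := by
    simpa using hΨ 3 id id Function.injective_id Function.injective_id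
  haveI : Fact (Nat.Prime 7) := ⟨by norm_num⟩
  rw [isUnit_iff_ne_zero]
  intro hdet0
  obtain ⟨v, hv0, hv⟩ := (Matrix.exists_mulVec_eq_zero_iff).2 hdet0
  -- the auxiliary matrix C
  set C : Matrix (Fin 3) (Fin 3) (ZMod 7) :=
    Matrix.of (fun j i => 2 * v (i, j) + v (j, i) - (if i = j then v (i, i) else 0)) with hC
  have hΨC : Ψ * C = 0 := by
    ext m i
    have h := congrFun hv (m, i)
    fin_cases i <;>
      simp [Matrix.mulVec, dotProduct, Fintype.sum_prod_type, hM, Fin.sum_univ_three,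
        Matrix.mul_apply, hC] at h ⊢ <;>
      linear_combination h
  have hC0 : C = 0 := by
    calc C = (Ψ⁻¹ * Ψ) * C := by rw [Matrix.nonsing_inv_mul Ψ hΨdet, Matrix.one_mul]
    _ = Ψ⁻¹ * (Ψ * C) := by rw [Matrix.mul_assoc]
    _ = 0 := by rw [hΨC, Matrix.mul_zero]
  apply hv0
  funext p
  obtain ⟨j, i⟩ := p
  by_cases hij : i = j
  · subst hij
    have h := congrFun (congrFun hC0 i) i
    simp only [hC, Matrix.of_apply, if_true, Matrix.zero_apply] at h
    have h2 : (2 : ZMod 7) * v (i, i) = 0 := by linear_combination h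
    have h2ne := two_ne_zero7
    rcases mul_eq_zero.1 h2 with h | h
    · exact absurd h h2ne
    · exact h
  · have h1 := congrFun (congrFun hC0 j) i
    have h2 := congrFun (congrFun hC0 i) j
    simp only [hC, Matrix.of_apply, if_neg hij, if_neg (Ne.symm hij), Matrix.zero_apply] at h1 h2
    have hab : v (j, i) = v (i, j) := by linear_combination h2 - h1
    rw [← hab] at h2
    have h3 : (3 : ZMod 7) * v (j, i) = 0 := by linear_combination h2
    have h3ne := three_ne_zero7
    rcases mul_eq_zero.1 h3 with h | h
    · exact absurd h h3ne
    · exact h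
end

section
/- With the setup of the explicit k = α = 3 code over F_7 (non-systematic node matrices G^{(m)} = [G^{(m)}_1, G^{(m)}_2, G^{(m)}_3] with blocks defined via a Cauchy matrix Ψ and ε = 2), the 6×6 matrix [[G^{(4)}_2, G^{(4)}_3],[G^{(5)}_2, G^{(5)}_3]] is invertible over F_7. -/
set_option maxRecDepth 8000
set_option maxHeartbeats 1600000


/-- Explicit `k = α = 3` code over `F₇`: the `6 × 6` matrix
`[[G⁽⁴⁾₂, G⁽⁴⁾₃],[G⁽⁵⁾₂, G⁽⁵⁾₃]]` is invertible.  Rows are indexed by `(m, i)` with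
`m ∈ {4,5}`, columns by `(j, t)` with block index `l = j + 1 ∈ {2,3}`; row `i` of block
`G⁽ᵐ⁾ₗ` equals `2ψ⁽ᵐ⁾` if `i = l` and `ψ⁽ᵐ⁾ₗ eᵢ` otherwise. -/
theorem statement4 (Ψ : Matrix (Fin 3) (Fin 3) (ZMod 7))
    (hΨ : ∀ (r : ℕ) (f : Fin r → Fin 3) (g : Fin r → Fin 3),
      Function.Injective f → Function.Injective g → IsUnit (Ψ.submatrix f g).det) :
    IsUnit (Matrix.det (Matrix.of fun (p : Fin 2 × Fin 3) (q : Fin 2 × Fin 3) =>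
      if p.2 = Fin.succ q.1 then 2 * Ψ (Fin.castSucc p.1) q.2
      else if q.2 = p.2 then Ψ (Fin.castSucc p.1) (Fin.succ q.1) else 0)) := by
  have hminor : IsUnit (Ψ 0 1 * Ψ 1 2 - Ψ 0 2 * Ψ 1 1) := by
    have h := hΨ 2 ![0, 1] ![1, 2] (by decide) (by decide)
    rw [Matrix.det_fin_two] at h
    simpa using h
  set M : Matrix (Fin 2 × Fin 3) (Fin 2 × Fin 3) (ZMod 7) :=
    (Matrix.of fun (p : Fin 2 × Fin 3) (q : Fin 2 × Fin 3) =>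
      if p.2 = Fin.succ q.1 then 2 * Ψ (Fin.castSucc p.1) q.2
      else if q.2 = p.2 then Ψ (Fin.castSucc p.1) (Fin.succ q.1) else 0) with hM
  -- the reindexing equivalence
  set e : Fin 6 ≃ Fin 2 × Fin 3 :=
    ((finProdFinEquiv (m := 3) (n := 2)).symm.trans (Equiv.prodComm (Fin 3) (Fin 2))) with he
  set f : (Fin 2 ⊕ Fin 4) ≃ Fin 2 × Fin 3 := (finSumFinEquiv (m := 2) (n := 4)).trans e with hf
  set A : Matrix (Fin 2) (Fin 2) (ZMod 7) := !![Ψ 0 1, Ψ 0 2; Ψ 1 1, Ψ 1 2] with hA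
  set C : Matrix (Fin 4) (Fin 2) (ZMod 7) :=
    !![2 * Ψ 0 0, 0; 2 * Ψ 1 0, 0; 0, 2 * Ψ 0 0; 0, 2 * Ψ 1 0] with hC
  set D : Matrix (Fin 4) (Fin 4) (ZMod 7) :=
    !![2 * Ψ 0 1, Ψ 0 2, 2 * Ψ 0 2, 0;
       2 * Ψ 1 1, Ψ 1 2, 2 * Ψ 1 2, 0;
       0, 2 * Ψ 0 1, Ψ 0 1, 2 * Ψ 0 2;
       0, 2 * Ψ 1 1, Ψ 1 1, 2 * Ψ 1 2] with hD
  have hB : M.submatrix f f = Matrix.fromBlocks A 0 C D := by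
    ext i j
    rcases i with i | i <;> rcases j with j | j <;>
      fin_cases i <;> fin_cases j <;> rfl
  have hdet : M.det = A.det * D.det := by
    rw [← Matrix.det_submatrix_equiv_self f M, hB, Matrix.det_fromBlocks_zero₁₂]
  have hAdet : A.det = Ψ 0 1 * Ψ 1 2 - Ψ 0 2 * Ψ 1 1 := by
    rw [hA, Matrix.det_fin_two] ; simp
  have hDdet : D.det = -12 * (Ψ 0 1 * Ψ 1 2 - Ψ 0 2 * Ψ 1 1) ^ 2 := by
    rw [hD]
    simp [Matrix.det_succ_row_zero, Fin.sum_univ_succ, Matrix.det_fin_three, Fin.succAbove]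
    ring
  have hu12 : IsUnit (-12 : ZMod 7) := by decide
  rw [hdet, hAdet, hDdet]
  exact hminor.mul (hu12.mul (hminor.pow 2))
end

section
/- (Explicit code, general k = α case, reconstruction) Let Ψ be an (n−k) × α matrix over F_q, q ≥ α + n − k, all of whose square submatrices are invertible, and let ε ∈ F_q satisfy ε ≠ 0, ε² ≠ 1. For each non-systematic node m ∈ {k+1,…,n}, define the α × kα matrix G^{(m)} with blocks G^{(m)}_l whose row i equals εψ^{(m)} if i = l and ψ^{(m)}_l e_i otherwise (here k = α). Then for any 1 ≤ p ≤ k, any p non-systematic nodes δ_1,…,δ_p, and any p systematic indices Ω_1 < … < Ω_p, the pα × pα block matrix R = (G^{(δ_i)}_{Ω_j})_{i,j=1,…,p} is invertible. -/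
/-- Reconstruction for the explicit `k = α` code: for any `p` non-systematic nodes
`δ₁,…,δ_p` and systematic indices `Ω₁ < … < Ω_p`, the `pα × pα` block matrix
`R = (G^{(δ_i)}_{Ω_j})` is invertible.  Row `(i, r)`, column `(j, t)` of `R` equals
`ε ψ^{(δ_i)}_t` if `r = Ω_j`, and `(ψ^{(δ_i)}_{Ω_j} e_r)_t` otherwise. -/
theorem statement6 {F : Type*} [Field F] [Fintype F] {N α : ℕ}
    (hq : α + N ≤ Fintype.card F)
    (Ψ : Matrix (Fin N) (Fin α) F)
    (hΨ : ∀ (r : ℕ) (f : Fin r → Fin N) (g : Fin r → Fin α),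
      Function.Injective f → Function.Injective g → IsUnit (Ψ.submatrix f g).det)
    (ε : F) (hε0 : ε ≠ 0) (hε1 : ε ^ 2 ≠ 1)
    {p : ℕ} (hp1 : 1 ≤ p) (hpk : p ≤ α)
    (δ : Fin p → Fin N) (hδ : Function.Injective δ)
    (Ω : Fin p → Fin α) (hΩ : StrictMono Ω) :
    IsUnit (Matrix.det (Matrix.of fun (ir jt : Fin p × Fin α) =>
      if ir.2 = Ω jt.1 then ε * Ψ (δ ir.1) jt.2
      else if jt.2 = ir.2 then Ψ (δ ir.1) (Ω jt.1) else 0)) := by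
  classical
  set A : Matrix (Fin p) (Fin p) F := Ψ.submatrix δ Ω with hA
  have hAdet : IsUnit A.det := hΨ p δ Ω hδ hΩ.injective
  have hAinj : ∀ u : Fin p → F, A.mulVec u = 0 → u = 0 := by
    intro u hu
    have h1 := congrArg (fun x => (A⁻¹).mulVec x) hu
    simpa [Matrix.mulVec_mulVec, Matrix.nonsing_inv_mul _ hAdet] using h1
  rw [isUnit_iff_ne_zero]
  intro hdet
  obtain ⟨v, hv0, hv⟩ := Matrix.exists_mulVec_eq_zero_iff.mpr hdet
  apply hv0
  have hrow : ∀ (i : Fin p) (r : Fin α),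
      ∑ j : Fin p, ∑ t : Fin α,
        (if r = Ω j then ε * Ψ (δ i) t else if t = r then Ψ (δ i) (Ω j) else 0) * v (j, t)
        = 0 := by
    intro i r
    have h := congrFun hv (i, r)
    simpa [Matrix.mulVec, dotProduct, Fintype.sum_prod_type] using h
  -- Step 1: v (j, r) = 0 whenever r is not in the range of Ω
  have hstep1 : ∀ (j : Fin p) (r : Fin α), r ∉ Set.range Ω → v (j, r) = 0 := by
    intro j r hr
    have key : A.mulVec (fun j => v (j, r)) = 0 := by
      funext i
      have h := hrow i r
      have hne : ∀ j : Fin p, ¬ (r = Ω j) := fun j h' => hr ⟨j, h'.symm⟩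
      simp only [if_neg (hne _)] at h
      have h2 : ∑ j : Fin p, Ψ (δ i) (Ω j) * v (j, r) = 0 := by
        simpa [ite_mul] using h
      simpa [Matrix.mulVec, dotProduct, hA] using h2
    exact congrFun (hAinj _ key) j
  -- Step 2: the equations for rows r = Ω j0
  have hstep2 : ∀ j0 j' : Fin p,
      ε * v (j0, Ω j') + (if j' = j0 then 0 else v (j', Ω j0)) = 0 := by
    intro j0 j'
    have key : A.mulVec
        (fun j => ε * v (j0, Ω j) + (if j = j0 then 0 else v (j, Ω j0))) = 0 := by
      funext i
      have h := hrow i (Ω j0)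
      have hsum : ∀ j : Fin p,
          ∑ t : Fin α,
            (if Ω j0 = Ω j then ε * Ψ (δ i) t else if t = Ω j0 then Ψ (δ i) (Ω j) else 0)
              * v (j, t)
          = if j = j0 then ∑ j' : Fin p, Ψ (δ i) (Ω j') * (ε * v (j0, Ω j'))
            else Ψ (δ i) (Ω j) * v (j, Ω j0) := by
        intro j
        by_cases hj : j = j0
        · subst hj
          simp only [eq_self_iff_true, if_true]
          have h1 : ∑ t : Fin α, ε * Ψ (δ i) t * v (j, t)
              = ∑ t ∈ Finset.univ.image Ω, ε * Ψ (δ i) t * v (j, t) := by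
            refine (Finset.sum_subset (Finset.subset_univ _) ?_).symm
            intro t _ ht
            have hrange : t ∉ Set.range Ω := by
              rintro ⟨j', hj'⟩
              exact ht (Finset.mem_image.mpr ⟨j', Finset.mem_univ _, hj'⟩)
            rw [hstep1 j t hrange, mul_zero]
          have h2 : ∑ t ∈ Finset.univ.image Ω, ε * Ψ (δ i) t * v (j, t)
              = ∑ j' : Fin p, ε * Ψ (δ i) (Ω j') * v (j, Ω j') :=
            Finset.sum_image (fun x _ y _ hxy => hΩ.injective hxy)
          rw [h1, h2]
          refine Finset.sum_congr rfl fun j' _ => by ring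
        · have hne : ¬ (Ω j0 = Ω j) := fun h' => hj (hΩ.injective h').symm
          simp [if_neg hne, if_neg hj, ite_mul]
      rw [Finset.sum_congr rfl fun j _ => hsum j] at h
      have hsplit : ∀ (X : F) (g : Fin p → F),
          ∑ j : Fin p, (if j = j0 then X else g j)
            = X + ∑ j : Fin p, (if j = j0 then 0 else g j) := by
        intro X g
        have : ∀ j : Fin p, (if j = j0 then X else g j)
            = (if j = j0 then X else 0) + (if j = j0 then 0 else g j) := by
          intro j; by_cases hj : j = j0 <;> simp [hj]
        rw [Finset.sum_congr rfl fun j _ => this j, Finset.sum_add_distrib,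
          Finset.sum_ite_eq' Finset.univ j0 (fun _ => X)]
        simp
      rw [hsplit] at h
      have : (A.mulVec fun j => ε * v (j0, Ω j) + (if j = j0 then 0 else v (j, Ω j0))) i
          = (∑ j' : Fin p, Ψ (δ i) (Ω j') * (ε * v (j0, Ω j')))
            + ∑ j : Fin p, (if j = j0 then 0 else Ψ (δ i) (Ω j) * v (j, Ω j0)) := by
        simp only [Matrix.mulVec, dotProduct, hA, Matrix.submatrix_apply, mul_add,
          Finset.sum_add_distrib]
        congr 1
        refine Finset.sum_congr rfl fun j _ => ?_
        by_cases hj : j = j0 <;> simp [hj]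
      rw [this, h]
      rfl
    exact congrFun (hAinj _ key) j'
  -- derive v = 0
  have hdiag : ∀ j : Fin p, v (j, Ω j) = 0 := by
    intro j
    have h := hstep2 j j
    rw [if_pos rfl, add_zero] at h
    exact (mul_eq_zero.mp h).resolve_left hε0
  have hoff : ∀ j j' : Fin p, v (j, Ω j') = 0 := by
    intro j j'
    by_cases hj : j' = j
    · subst hj; exact hdiag _
    · have h1 := hstep2 j j'
      have h2 := hstep2 j' j
      rw [if_neg hj] at h1
      rw [if_neg (fun h => hj h.symm)] at h2
      have hb : (1 - ε ^ 2) * v (j', Ω j) = 0 := by linear_combination h1 - ε * h2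
      have hne : (1 : F) - ε ^ 2 ≠ 0 := sub_ne_zero.mpr (Ne.symm hε1)
      have hb0 : v (j', Ω j) = 0 := (mul_eq_zero.mp hb).resolve_left hne
      have : ε * v (j, Ω j') = 0 := by rw [hb0, add_zero] at h1; exact h1
      exact (mul_eq_zero.mp this).resolve_left hε0
  funext jt
  obtain ⟨j, t⟩ := jt
  by_cases ht : t ∈ Set.range Ω
  · obtain ⟨j', hj'⟩ := ht
    rw [← hj']; exact hoff j j'
  · exact hstep1 j t ht
end

section
/- (Regeneration of the explicit code) In the explicit k = α code, for any failed systematic node index l ∈ {1,…,k} and any α non-systematic nodes m_1,…,m_α, the α vectors g^{(m_1)}_{l,l},…,g^{(m_α)}_{l,l} (the l-th diagonal block rows, each equal to εψ^{(m_i)}) are linearly independent, and for every other systematic index l' ≠ l, the interference components g^{(m_i)}_{l,l'} = ψ^{(m_i)}_{l'} e_l are all scalar multiples of the single vector e_l. -/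
/-- Regeneration for the explicit `k = α` code: for a failed systematic node `l` and any
`α` distinct non-systematic nodes `m₁,…,m_α`, the diagonal-block rows
`g^{(m_i)}_{l,l} = ε ψ^{(m_i)}` are linearly independent, and for every `l' ≠ l` the
interference components `g^{(m_i)}_{l,l'} = ψ^{(m_i)}_{l'} e_l` are all scalar multiples of
the single vector `e_l`. -/
theorem statement7 {F : Type*} [Field F] {N α : ℕ}
    (Ψ : Matrix (Fin N) (Fin α) F)
    (hΨ : ∀ (r : ℕ) (f : Fin r → Fin N) (g : Fin r → Fin α),
      Function.Injective f → Function.Injective g → IsUnit (Ψ.submatrix f g).det)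
    (ε : F) (hε0 : ε ≠ 0) (hε1 : ε ^ 2 ≠ 1)
    (l : Fin α) (m : Fin α → Fin N) (hm : Function.Injective m) :
    LinearIndependent F (fun i : Fin α => fun t : Fin α => ε * Ψ (m i) t) ∧
      ∀ l' : Fin α, l' ≠ l → ∀ i : Fin α, ∃ c : F,
        (fun t : Fin α => if t = l then Ψ (m i) l' else 0) =
          c • (Pi.single l 1 : Fin α → F) := by
  constructor
  · have hunit : IsUnit (Ψ.submatrix m id) := by
      rw [Matrix.isUnit_iff_isUnit_det]
      exact hΨ α m id hm Function.injective_id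
    have h2 : IsUnit (ε • Ψ.submatrix m id) := by
      have : IsUnit ((ε • (1 : Matrix (Fin α) (Fin α) F)) * Ψ.submatrix m id) := by
        apply IsUnit.mul _ hunit
        rw [Matrix.isUnit_iff_isUnit_det]
        simp [Matrix.det_smul, hε0]
      simpa [Matrix.smul_mul] using this
    have := Matrix.linearIndependent_rows_iff_isUnit.2 h2
    have heq : (fun i : Fin α => fun t : Fin α => ε * Ψ (m i) t)
        = fun i => (ε • Ψ.submatrix m id) i := by
      funext i t; simp [Matrix.smul_apply]
    rw [heq]; exact this
  · intro l' _ i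
    exact ⟨Ψ (m i) l', by
      funext t
      by_cases h : t = l <;> simp [h, Pi.single_apply]⟩
end

section
/- If there exists a linear (k, α) exact-regenerating code at the MSR point (B = kα, d = α + k − 1, β = 1) with exact regeneration of all systematic nodes, then for any k̂ ≤ k there exists a linear (k̂, α) exact-regenerating code at the MSR point (B̂ = k̂α, d̂ = α + k̂ − 1, β = 1) with exact regeneration of all systematic nodes. -/
/-! Shortening: drop `k - k̂` systematic nodes and the `(k - k̂)α` source symbols they store.
Any `k̂` nodes of the shortened code, padded with the dropped systematic nodes, are `k` nodes
of the original code whose reconstruction matrix is block triangular with an identity block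
on the dropped symbols, so its determinant is that of the shortened one. A failed kept
systematic node is repaired from `α + k̂ - 1` helpers plus the `k - k̂` dropped systematic
nodes, `α + k - 1` in all; the dropped helpers contribute nothing on the kept symbols. -/

/-- A linear `(k, α)` MSR exact-regenerating code with `k` systematic nodes and `s`
non-systematic nodes: each node stores `α` linear combinations of the `B = kα` source
symbols, any `k` nodes allow reconstruction, and any failed systematic node is exactly
regenerated from any `d = α + k - 1` surviving nodes, each passing one linear
combination of its rows (`β = 1`). -/
structure MSRCode (F : Type*) [Field F] (k α s : ℕ) where
  G : (Fin k ⊕ Fin s) → Matrix (Fin α) (Fin k × Fin α) F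
  systematic : ∀ (m : Fin k) (i : Fin α) (q : Fin k × Fin α),
    G (Sum.inl m) i q = if q.1 = m ∧ q.2 = i then 1 else 0
  reconstruction : ∀ f : Fin k → (Fin k ⊕ Fin s), Function.Injective f →
    IsUnit (Matrix.det (Matrix.of fun p q : Fin k × Fin α => G (f p.1) p.2 q))
  regeneration : ∀ (l : Fin k) (D : Finset (Fin k ⊕ Fin s)),
    D.card = α + k - 1 → Sum.inl l ∉ D →
    ∃ (x : (Fin k ⊕ Fin s) → Fin α → F) (Y : Fin α → (Fin k ⊕ Fin s) → F),
      ∀ (i : Fin α) (q : Fin k × Fin α),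
        G (Sum.inl l) i q = ∑ m ∈ D, Y i m * ∑ j, x m j * G m j q

namespace MSRCode

open Function Matrix

variable {F : Type*} [Field F] {k α s kh r : ℕ}

theorem G_inl_eq_zero_of_ne (C : MSRCode F k α s) {m : Fin k} {q : Fin k × Fin α}
    (h : q.1 ≠ m) (i : Fin α) : C.G (Sum.inl m) i q = 0 := by
  rw [C.systematic, if_neg (fun hq => h hq.1)]

/-- Splitting `Fin k` as `Fin kh ⊕ Fin r` by `e`, the kept systematic nodes are those of
`e (inl _)`, the dropped ones those of `e (inr _)`; parity nodes are all kept. -/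
def keptNode (e : Fin kh ⊕ Fin r ≃ Fin k) : Fin kh ⊕ Fin s → Fin k ⊕ Fin s :=
  Sum.map (e ∘ Sum.inl) id

def droppedNode (e : Fin kh ⊕ Fin r ≃ Fin k) (j : Fin r) : Fin k ⊕ Fin s :=
  Sum.inl (e (Sum.inr j))

theorem keptNode_injective (e : Fin kh ⊕ Fin r ≃ Fin k) :
    Injective (keptNode (s := s) e) :=
  Sum.map_injective.2 ⟨e.injective.comp Sum.inl_injective, injective_id⟩

theorem droppedNode_injective (e : Fin kh ⊕ Fin r ≃ Fin k) :
    Injective (droppedNode (s := s) e) :=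
  Sum.inl_injective.comp (e.injective.comp Sum.inr_injective)

theorem keptNode_ne_droppedNode (e : Fin kh ⊕ Fin r ≃ Fin k) (n : Fin kh ⊕ Fin s)
    (j : Fin r) : keptNode e n ≠ droppedNode e j := by
  cases n <;> simp [keptNode, droppedNode]

theorem G_droppedNode_eq_zero (C : MSRCode F k α s) (e : Fin kh ⊕ Fin r ≃ Fin k)
    (j : Fin r) (i : Fin α) (q : Fin kh × Fin α) :
    C.G (droppedNode e j) i (e (Sum.inl q.1), q.2) = 0 :=
  C.G_inl_eq_zero_of_ne (by simp) i

def paddedNodes (e : Fin kh ⊕ Fin r ≃ Fin k) (f : Fin kh → Fin kh ⊕ Fin s) :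
    Fin k → Fin k ⊕ Fin s :=
  Sum.elim (keptNode e ∘ f) (droppedNode e) ∘ e.symm

theorem paddedNodes_injective (e : Fin kh ⊕ Fin r ≃ Fin k) {f : Fin kh → Fin kh ⊕ Fin s}
    (hf : Injective f) : Injective (paddedNodes e f) :=
  ((keptNode_injective e).comp hf).sumElim (droppedNode_injective e)
    (fun a j => keptNode_ne_droppedNode e (f a) j) |>.comp e.symm.injective

theorem det_paddedNodes (C : MSRCode F k α s) (e : Fin kh ⊕ Fin r ≃ Fin k)
    (f : Fin kh → Fin kh ⊕ Fin s) :
    det (of fun p q : Fin k × Fin α => C.G (paddedNodes e f p.1) p.2 q) =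
      det (of fun p q : Fin kh × Fin α =>
        C.G (keptNode e (f p.1)) p.2 (e (Sum.inl q.1), q.2)) := by
  set M := of fun p q : Fin k × Fin α => C.G (paddedNodes e f p.1) p.2 q
  let E : (Fin kh × Fin α) ⊕ (Fin r × Fin α) ≃ Fin k × Fin α :=
    (Equiv.sumProdDistrib _ _ _).symm.trans (e.prodCongr (Equiv.refl _))
  have hblocks : M.submatrix E E = fromBlocks
      (of fun p q : Fin kh × Fin α => C.G (keptNode e (f p.1)) p.2 (e (Sum.inl q.1), q.2))
      (of fun p q => M (E (Sum.inl p)) (E (Sum.inr q))) 0 1 := by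
    ext (p | p) (q | q)
    · simp [M, E, paddedNodes]
    · rfl
    · simpa [M, E, paddedNodes] using C.G_droppedNode_eq_zero e p.1 p.2 q
    · simp [M, E, paddedNodes, droppedNode, C.systematic, one_apply, Prod.ext_iff, eq_comm]
  rw [← det_submatrix_equiv_self E M, hblocks, det_fromBlocks_zero₂₁, det_one, mul_one]

theorem isUnit_det_shorten (C : MSRCode F k α s) (e : Fin kh ⊕ Fin r ≃ Fin k)
    (f : Fin kh → Fin kh ⊕ Fin s) (hf : Injective f) :
    IsUnit (det (of fun p q : Fin kh × Fin α =>
      C.G (keptNode e (f p.1)) p.2 (e (Sum.inl q.1), q.2))) :=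
  C.det_paddedNodes e f ▸ C.reconstruction _ (paddedNodes_injective e hf)

theorem exists_shorten_repair (C : MSRCode F k α s) (e : Fin kh ⊕ Fin r ≃ Fin k)
    (l : Fin kh) (D : Finset (Fin kh ⊕ Fin s)) (hD : D.card = α + kh - 1)
    (hl : Sum.inl l ∉ D) :
    ∃ (x : (Fin kh ⊕ Fin s) → Fin α → F) (Y : Fin α → (Fin kh ⊕ Fin s) → F),
      ∀ (i : Fin α) (q : Fin kh × Fin α),
        C.G (keptNode e (Sum.inl l)) i (e (Sum.inl q.1), q.2) =
          ∑ m ∈ D, Y i m * ∑ j, x m j * C.G (keptNode e m) j (e (Sum.inl q.1), q.2) := by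
  classical
  let kept : Fin kh ⊕ Fin s ↪ Fin k ⊕ Fin s := ⟨keptNode e, keptNode_injective e⟩
  let dropped : Fin r ↪ Fin k ⊕ Fin s := ⟨droppedNode e, droppedNode_injective e⟩
  have hdisj : Disjoint (D.map kept) (Finset.univ.map dropped) := by
    simp only [Finset.disjoint_left, Finset.mem_map, Finset.mem_univ, true_and,
      not_exists, forall_exists_index, and_imp]
    rintro _ n - rfl j hj
    exact keptNode_ne_droppedNode e n j hj.symm
  have hk : kh + r = k := by simpa using Fintype.card_congr e
  have hcard : (D.map kept ∪ Finset.univ.map dropped).card = α + k - 1 := by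
    rw [Finset.card_union_of_disjoint hdisj, Finset.card_map, Finset.card_map, hD,
      Finset.card_univ, Fintype.card_fin]
    have := l.pos
    omega
  have hl' : keptNode e (Sum.inl l) ∉ D.map kept ∪ Finset.univ.map dropped := by
    simp only [Finset.mem_union, Finset.mem_map, Finset.mem_univ, true_and, not_or,
      not_exists, not_and]
    exact ⟨fun n hn h => hl (keptNode_injective e h ▸ hn),
      fun j h => keptNode_ne_droppedNode e _ j h.symm⟩
  obtain ⟨x, Y, hrepair⟩ := C.regeneration (e (Sum.inl l)) _ hcard hl'
  refine ⟨fun n => x (keptNode e n), fun i n => Y i (keptNode e n), fun i q =>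
    (hrepair i _).trans ?_⟩
  rw [Finset.sum_union hdisj, Finset.sum_map, Finset.sum_map]
  simp [kept, dropped, C.G_droppedNode_eq_zero]

def shorten (C : MSRCode F k α s) (e : Fin kh ⊕ Fin r ≃ Fin k) : MSRCode F kh α s where
  G n := of fun i q => C.G (keptNode e n) i (e (Sum.inl q.1), q.2)
  systematic m i q := by simp [keptNode, C.systematic]
  reconstruction := C.isUnit_det_shorten e
  regeneration := C.exists_shorten_repair e

end MSRCode

/-- If a linear `(k, α)` MSR exact-regenerating code exists, then for any `k̂ ≤ k` a
linear `(k̂, α)` MSR exact-regenerating code exists (same non-systematic node count). -/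
theorem statement8 {F : Type*} [Field F] {k α s : ℕ} (kh : ℕ) (hkh : kh ≤ k)
    (h : Nonempty (MSRCode F k α s)) : Nonempty (MSRCode F kh α s) :=
  h.map fun C => C.shorten (finSumFinEquiv.trans (finCongr (Nat.add_sub_cancel' hkh)))
end

section
/- (Necessity of full-rank blocks) In any linear (k,α) MSR exact-regenerating code with systematic nodes 1,…,k, for every non-systematic node m and every l ∈ {1,…,k}, the α × α block G^{(m)}_l (the component of node m's matrix along systematic node l) is invertible. -/
/-- In any linear `(k,α)` MSR exact-regenerating code, every `α × α` block `G^{(m)}_l` of a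
non-systematic node matrix (its component along systematic node `l`) is invertible. -/
theorem statement9 {F : Type*} [Field F] {k α s : ℕ} (C : MSRCode F k α s)
    (m : Fin s) (l : Fin k) :
    IsUnit (Matrix.det (Matrix.of fun i j : Fin α => C.G (Sum.inr m) i (l, j))) := by
  classical
  set f : Fin k → (Fin k ⊕ Fin s) := fun p => if p = l then Sum.inr m else Sum.inl p with hf
  have hinj : Function.Injective f := by
    intro a b hab
    by_cases ha : a = l <;> by_cases hb : b = l <;>
      simp [hf, ha, hb] at hab <;> simp [ha, hb, hab]
  have hM := C.reconstruction f hinj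
  rw [isUnit_iff_ne_zero] at hM ⊢
  intro hdet
  obtain ⟨v, hv, hv0⟩ := Matrix.exists_mulVec_eq_zero_iff.mpr hdet
  apply hM
  rw [← Matrix.exists_mulVec_eq_zero_iff]
  refine ⟨fun q => if q.1 = l then v q.2 else 0, ?_, ?_⟩
  · intro h
    apply hv
    funext j
    have := congrFun h (l, j)
    simpa using this
  · funext p
    simp only [Matrix.mulVec, dotProduct, Matrix.of_apply, Fintype.sum_prod_type]
    rw [Finset.sum_eq_single l]
    · by_cases hp : p.1 = l
      · have := congrFun hv0 p.2
        simp only [Matrix.mulVec, dotProduct, Matrix.of_apply, Pi.zero_apply] at this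
        simp [hf, hp, this]
      · simp [hf, hp, C.systematic, Ne.symm hp]
    · intro b _ hb
      simp [hb]
    · simp
end

section
/- (Necessity of independent components along the failed node) In a linear (k,α) MSR exact-regenerating code with β = 1 and d = α + k − 1, suppose a failed systematic node l is regenerated from the k−1 surviving systematic nodes and α non-systematic nodes, each passing one vector. If Y is an α × d matrix with Y·V = G^{(l)} where V stacks the d passed vectors, then the α vectors v^{(m_i,l)}_l (components along node l of the vectors passed by the α non-systematic nodes) are linearly independent in F_q^α. -/
/-! Only the block-`l` coordinates of the regeneration equations matter. There the systematic
contributions vanish, so they say `B * W = 1` for the `α × α` matrix `B = (b i j)` and the matrix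
`W` whose rows are the block-`l` components of the `w j`. A one-sided inverse of a square matrix
over a field is two-sided, so `W` is invertible and its rows are linearly independent. -/

theorem Matrix.linearIndependent_rows_of_mul_eq_one {m K : Type*} [Fintype m] [DecidableEq m]
    [Field K] {A B : Matrix m m K} (h : B * A = 1) : LinearIndependent K A.row :=
  linearIndependent_rows_iff_isUnit.2 (.of_mul_eq_one_right B h)

theorem regeneration_block_mul_eq_one {F : Type*} [Field F] {k α : ℕ} (l : Fin k)
    (u : {m : Fin k // m ≠ l} → (Fin k × Fin α → F)) (w : Fin α → (Fin k × Fin α → F))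
    (hu : ∀ m t, u m (l, t) = 0)
    (c : Fin α → {m : Fin k // m ≠ l} → F) (b : Fin α → Fin α → F)
    (hregen : ∀ (i : Fin α) (q : Fin k × Fin α),
      (if q.1 = l ∧ q.2 = i then (1 : F) else 0) =
        (∑ m, c i m * u m q) + ∑ j, b i j * w j q) :
    Matrix.of b * Matrix.of (fun j t => w j (l, t)) = 1 := by
  ext i t
  have hit := hregen i (l, t)
  simp only [hu, mul_zero, Finset.sum_const_zero, zero_add, true_and] at hit
  simp only [Matrix.mul_apply, Matrix.of_apply, Matrix.one_apply, ← hit, eq_comm]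

/-- Necessity of independent components along the failed node: if the failed systematic
node `l` is exactly regenerated (via recovery coefficients `c`, `b`) from the vectors `u m`
passed by the `k-1` surviving systematic nodes (whose block-`l` components vanish) and the
vectors `w j` passed by `α` non-systematic nodes, then the block-`l` components of the
`w j` are linearly independent. -/
theorem statement10 {F : Type*} [Field F] {k α : ℕ} (l : Fin k)
    (u : {m : Fin k // m ≠ l} → (Fin k × Fin α → F))
    (w : Fin α → (Fin k × Fin α → F))
    (hu : ∀ m t, u m (l, t) = 0)
    (c : Fin α → {m : Fin k // m ≠ l} → F) (b : Fin α → Fin α → F)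
    (hregen : ∀ (i : Fin α) (q : Fin k × Fin α),
      (if q.1 = l ∧ q.2 = i then (1 : F) else 0) =
        (∑ m, c i m * u m q) + ∑ j, b i j * w j q) :
    LinearIndependent F (fun j : Fin α => fun t : Fin α => w j (l, t)) :=
  Matrix.linearIndependent_rows_of_mul_eq_one (regeneration_block_mul_eq_one l u w hu c b hregen)
end

section
/- (Necessity of interference alignment) In a linear (k,α) MSR exact-regenerating code with β = 1 and d = α + k − 1, suppose failed systematic node l is regenerated from the k−1 surviving systematic nodes and α non-systematic nodes. Then for every surviving systematic index l' ≠ l, the α vectors v^{(m_i,l)}_{l'} ∈ F_q^α (interference components along node l' in the vectors passed by the α non-systematic nodes) span a subspace of dimension at most 1; together with the single vector passed by systematic node l', they all lie on one line. -/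
/-- Necessity of interference alignment: under exact regeneration of systematic node `l`
from the `k-1` surviving systematic nodes (each supported only on its own block) and `α`
non-systematic nodes, for each surviving systematic index `l' ≠ l` the interference
components along block `l'` of the vectors passed by the non-systematic nodes, together
with the vector passed by systematic node `l'`, span a subspace of dimension at most 1. -/
theorem statement11 {F : Type*} [Field F] {k α : ℕ} (l : Fin k)
    (u : {m : Fin k // m ≠ l} → (Fin k × Fin α → F))
    (w : Fin α → (Fin k × Fin α → F))
    (hu : ∀ (m : {m : Fin k // m ≠ l}) (q : Fin k × Fin α), q.1 ≠ (m : Fin k) → u m q = 0)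
    (c : Fin α → {m : Fin k // m ≠ l} → F) (b : Fin α → Fin α → F)
    (hregen : ∀ (i : Fin α) (q : Fin k × Fin α),
      (if q.1 = l ∧ q.2 = i then (1 : F) else 0) =
        (∑ m, c i m * u m q) + ∑ j, b i j * w j q) :
    ∀ (l' : Fin k) (hl' : l' ≠ l),
      Module.finrank F (Submodule.span F
        (insert (fun t : Fin α => u ⟨l', hl'⟩ (l', t))
          (Set.range fun j : Fin α => fun t : Fin α => w j (l', t)))) ≤ 1 := by
  intro l' hl'
  set v : Fin α → F := fun t => u ⟨l', hl'⟩ (l', t) with hv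
  -- the matrix B := b and W := (w j (l, ·)) satisfy B * W = 1
  set B : Matrix (Fin α) (Fin α) F := Matrix.of b with hB
  set W : Matrix (Fin α) (Fin α) F := Matrix.of (fun j t => w j (l, t)) with hW
  have hBW : B * W = 1 := by
    ext i t
    have h := hregen i (l, t)
    have hz : ∀ m : {m : Fin k // m ≠ l}, c i m * u m (l, t) = 0 := by
      intro m
      rw [hu m (l, t) (Ne.symm m.2), mul_zero]
    rw [Finset.sum_congr rfl (fun m _ => hz m), Finset.sum_const, smul_zero, zero_add] at h
    simp only [Matrix.mul_apply, Matrix.one_apply, hB, hW, Matrix.of_apply]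
    rw [← h]
    simp [eq_comm]
  have hWB : W * B = 1 := mul_eq_one_comm.mp hBW
  -- key alignment equations
  have key : ∀ i t, ∑ j, b i j * w j (l', t) = -(c i ⟨l', hl'⟩ * v t) := by
    intro i t
    have h := hregen i (l', t)
    have hl'l : ¬(l' = l ∧ t = i) := fun h' => hl' h'.1
    rw [if_neg hl'l] at h
    have hsum : ∑ m, c i m * u m (l', t) = c i ⟨l', hl'⟩ * v t := by
      apply Finset.sum_eq_single_of_mem (⟨l', hl'⟩ : {m : Fin k // m ≠ l}) (Finset.mem_univ _)
      intro m _ hm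
      rw [hu m (l', t) (fun he => hm (Subtype.ext he.symm)), mul_zero]
    rw [hsum] at h
    linear_combination -h
  -- each w j (l', ·) is a multiple of v
  have hwv : ∀ j : Fin α, (fun t : Fin α => w j (l', t)) =
      (∑ i, w j (l, i) * -(c i ⟨l', hl'⟩)) • v := by
    intro j
    funext t
    have : w j (l', t) = ∑ p, (W * B) j p * w p (l', t) := by
      rw [hWB]; simp [Matrix.one_apply]
    rw [this]
    simp only [Matrix.mul_apply, hW, hB, Matrix.of_apply, Finset.sum_mul]
    rw [Finset.sum_comm]
    calc ∑ i, ∑ p, w j (l, i) * b i p * w p (l', t)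
        = ∑ i, w j (l, i) * ∑ p, b i p * w p (l', t) := by
          congr 1; funext i; rw [Finset.mul_sum]; congr 1; funext p; ring
      _ = ∑ i, w j (l, i) * -(c i ⟨l', hl'⟩ * v t) := by
          congr 1; funext i; rw [key i t]
      _ = (∑ i, w j (l, i) * -(c i ⟨l', hl'⟩)) * v t := by
          rw [Finset.sum_mul]; congr 1; funext i; ring
      _ = _ := rfl
  -- the whole set lies in the line spanned by v
  have hle : Submodule.span F
      (insert (fun t : Fin α => u ⟨l', hl'⟩ (l', t))
        (Set.range fun j : Fin α => fun t : Fin α => w j (l', t))) ≤ Submodule.span F {v} := by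
    rw [Submodule.span_le]
    rintro x (rfl | ⟨j, rfl⟩)
    · exact Submodule.mem_span_singleton_self v
    · show (fun t : Fin α => w j (l', t)) ∈ (Submodule.span F {v} : Submodule F (Fin α → F))
      rw [hwv j]
      exact Submodule.smul_mem _ _ (Submodule.mem_span_singleton_self v)
  calc Module.finrank F _ ≤ Module.finrank F (Submodule.span F {v}) :=
        Submodule.finrank_mono hle
    _ ≤ 1 := by
        by_cases hv0 : v = 0
        · rw [hv0, Submodule.span_zero_singleton]; simp
        · rw [finrank_span_singleton hv0]
end

section
/- (Sufficiency of alignment plus independence) Suppose in a linear (k,α) MSR code with β = 1, the vectors passed by α non-systematic nodes for regenerating systematic node l satisfy: (i) their components along node l are linearly independent, and (ii) for each surviving systematic node l' ≠ l, their components along l' are all scalar multiples of a single vector w^{(l)}_{l'}. Then, with each surviving systematic node l' passing the vector with block l' equal to w^{(l)}_{l'} and all other blocks zero, exact regeneration of node l is possible: there exists an α × (α + k − 1) matrix Y with Y V = G^{(l)}. -/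
/-- Sufficiency of alignment plus independence: if the components along the failed node `l`
of the vectors `w j` passed by `α` non-systematic nodes are linearly independent, and for
every `l' ≠ l` their components along block `l'` are scalar multiples of a single vector
`W l'`, then with each surviving systematic node `l'` passing the vector supported on
block `l'` equal to `W l'`, exact regeneration of node `l` is possible. -/
theorem statement12 {F : Type*} [Field F] {k α : ℕ} (l : Fin k)
    (w : Fin α → (Fin k × Fin α → F))
    (hind : LinearIndependent F (fun j : Fin α => fun t : Fin α => w j (l, t)))
    (W : Fin k → (Fin α → F))
    (halign : ∀ l' : Fin k, l' ≠ l → ∀ j : Fin α, ∃ c : F,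
      (fun t : Fin α => w j (l', t)) = c • W l') :
    ∃ (c : Fin α → Fin k → F) (b : Fin α → Fin α → F),
      ∀ (i : Fin α) (q : Fin k × Fin α),
        (if q.1 = l ∧ q.2 = i then (1 : F) else 0) =
          (∑ m : Fin k, if m ≠ l then c i m * (if q.1 = m then W m q.2 else 0) else 0)
            + ∑ j, b i j * w j q := by
  classical
  rcases isEmpty_or_nonempty (Fin α) with hemp | hne
  · exact ⟨0, 0, fun i => isEmptyElim i⟩
  have hcard : Fintype.card (Fin α) = Module.finrank F (Fin α → F) := by simp
  let B := basisOfLinearIndependentOfCardEqFinrank hind hcard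
  have hB : ∀ j, B j = fun t => w j (l, t) := fun j => by
    simp [B, coe_basisOfLinearIndependentOfCardEqFinrank]
  let b : Fin α → Fin α → F := fun i j => B.repr (Pi.single i 1) j
  have hb : ∀ i t, ∑ j, b i j * w j (l, t) = if t = i then (1 : F) else 0 := by
    intro i t
    have h1 := B.sum_repr (Pi.single i 1)
    have h2 := congrFun h1 t
    simp only [Finset.sum_apply, Pi.smul_apply, smul_eq_mul] at h2
    have h3 : ∑ j, b i j * w j (l, t) = (Pi.single i (1 : F) : Fin α → F) t := by
      rw [← h2]
      exact Finset.sum_congr rfl fun j _ => by rw [hB j]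
    rw [h3, Pi.single_apply]
  -- the scalars from alignment
  let d : Fin k → Fin α → F := fun m j =>
    if h : m ≠ l then (halign m h j).choose else 0
  have hd : ∀ m (h : m ≠ l) j t, w j (m, t) = d m j * W m t := by
    intro m h j t
    have hs := (halign m h j).choose_spec
    have hs' := congrFun hs t
    simpa [d, h] using hs'
  refine ⟨fun i m => -∑ j, b i j * d m j, b, ?_⟩
  rintro i ⟨q1, q2⟩
  by_cases h : q1 = l
  · subst h
    have hsum0 : (∑ m : Fin k,
        if m ≠ q1 then (-∑ j, b i j * d m j) * (if q1 = m then W m q2 else 0) else 0) = 0 := by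
      apply Finset.sum_eq_zero
      intro m _
      by_cases hm : m = q1
      · simp [hm]
      · simp [hm, Ne.symm hm]
    simp only [true_and]
    rw [hsum0, zero_add, hb i q2]
  · have hsum : (∑ m : Fin k,
        if m ≠ l then (-∑ j, b i j * d m j) * (if q1 = m then W m q2 else 0) else 0)
        = (-∑ j, b i j * d q1 j) * W q1 q2 := by
      rw [Finset.sum_eq_single q1]
      · simp [h]
      · intro m _ hm
        by_cases hml : m = l
        · simp [hml]
        · simp [hml, Ne.symm hm]
      · simp
    have hw : ∑ j, b i j * w j (q1, q2) = (∑ j, b i j * d q1 j) * W q1 q2 := by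
      rw [Finset.sum_mul]
      exact Finset.sum_congr rfl fun j _ => by rw [hd q1 h j q2, mul_assoc]
    simp only [h, false_and, if_false, hsum, hw]
    ring
end

section
/- (Canonical form / uniqueness of structure) Let k ≥ α + 1 and consider a linear (k,α) MSR exact-regenerating code (β = 1, d = α + k − 1) with systematic nodes 1,…,k. Then there is an equivalent code (same stored subspaces and same passed vectors) in which, for every non-systematic node m, the block decomposition satisfies G^{(m)}_j = Λ^{(m)}_j H^{(m)}_j with Λ^{(m)}_j diagonal and invertible, and the row vectors h^{(m)}_{i,j} (rows of H^{(m)}_j) satisfy h^{(m)}_{i,j} = h_{i,j} independent of m for all i = 1,…,α and j ≠ i; moreover each non-systematic node passes the i-th row of its node matrix for regeneration of systematic node i (1 ≤ i ≤ α). -/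
/-!
Block `j` of a non-systematic node is an invertible `α × α` matrix: put the node in place of
systematic node `j` and use the MDS property. Repairing systematic node `l` from `α`
non-systematic helpers forces, for every `j ≠ l`, block `j` of each passed vector to be a
nonzero multiple of `x (inl j) l` (interference alignment). As `k ≥ α + 1` there is a block `j₀`
outside `0, …, α - 1`; there, the vectors a node passes to systematic nodes `0, …, α - 1` are a
nonzero rescaling of the vectors `x (inl j₀) i`, which do not depend on the node. So a linear
relation among them, if one existed for one node, would hold (rescaled) for every node; read in
block `i₀` it would put the block-`i₀` components of all vectors passed for repairing `i₀`, which
span `F^α`, into a space of dimension `α - 1`. Hence these `α` passed vectors are a basis of the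
node's row space, and taking them as its new rows gives the canonical form.
-/

open Matrix Function

theorem exists_embedding_apply_eq {α s : ℕ} (hs : α ≤ s) (hα : 0 < α) (m : Fin s) :
    ∃ (w : Fin α ↪ Fin s) (r : Fin α), w r = m := by
  classical
  refine ⟨(Fin.castLEEmb hs).trans (Equiv.swap (Fin.castLE hs ⟨0, hα⟩) m).toEmbedding,
    ⟨0, hα⟩, ?_⟩
  simp

theorem curry_sum_smul_vecMul {R ι n κ ν : Type*} [CommSemiring R] [Fintype ι] [Fintype n]
    (d : ι → R) (v : ι → n → R) (M : Matrix n (κ × ν) R) (j : κ) :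
    curry ((∑ i, d i • v i) ᵥ* M) j = ∑ i, d i • curry (v i ᵥ* M) j := by
  ext t
  simp [sum_vecMul, smul_vecMul, Finset.sum_apply]

theorem span_range_row_mul_le {R l m n : Type*} [CommSemiring R] [Fintype m] (B : Matrix l m R)
    (M : Matrix m n R) :
    Submodule.span R (Set.range (B * M).row) ≤ Submodule.span R (Set.range M.row) := by
  rw [Submodule.span_le, ← range_vecMulLinear]
  rintro _ ⟨i, rfl⟩
  exact ⟨B i, rfl⟩

theorem span_range_row_mul_of_isUnit {R m n : Type*} [CommRing R] [Fintype m]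
    [DecidableEq m] {A : Matrix m m R} (hA : IsUnit A.det) (M : Matrix m n R) :
    Submodule.span R (Set.range (A * M).row) = Submodule.span R (Set.range M.row) := by
  refine (span_range_row_mul_le A M).antisymm ?_
  simpa only [nonsing_inv_mul_cancel_left _ M hA] using span_range_row_mul_le A⁻¹ (A * M)

section

variable {F : Type*} [Field F] {k α s : ℕ}

def IsSystematic (G : (Fin k ⊕ Fin s) → Matrix (Fin α) (Fin k × Fin α) F) : Prop :=
  ∀ (m : Fin k) (i : Fin α) (q : Fin k × Fin α),
    G (.inl m) i q = if q.1 = m ∧ q.2 = i then 1 else 0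

def IsMDS (G : (Fin k ⊕ Fin s) → Matrix (Fin α) (Fin k × Fin α) F) : Prop :=
  ∀ f : Fin k → (Fin k ⊕ Fin s), Injective f →
    IsUnit (Matrix.of fun p q : Fin k × Fin α => G (f p.1) p.2 q).det

def IsExactRepair (G : (Fin k ⊕ Fin s) → Matrix (Fin α) (Fin k × Fin α) F)
    (x : (Fin k ⊕ Fin s) → Fin k → Fin α → F) : Prop :=
  ∀ (l : Fin k) (D : Finset (Fin s)), D.card = α →
    ∃ Y : Fin α → (Fin k ⊕ Fin s) → F, ∀ (i : Fin α) (q : Fin k × Fin α),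
      G (.inl l) i q =
        (∑ m : Fin k, if m ≠ l then Y i (.inl m) * (x (.inl m) l ᵥ* G (.inl m)) q else 0)
          + ∑ m ∈ D, Y i (.inr m) * (x (.inr m) l ᵥ* G (.inr m)) q

variable {G : (Fin k ⊕ Fin s) → Matrix (Fin α) (Fin k × Fin α) F}
  {x : (Fin k ⊕ Fin s) → Fin k → Fin α → F}

theorem vecMul_systematic_apply (hsys : IsSystematic G) (v : Fin α → F) (m : Fin k)
    (q : Fin k × Fin α) : (v ᵥ* G (.inl m)) q = if q.1 = m then v q.2 else 0 := by
  simp only [vecMul, dotProduct, hsys m, mul_ite, mul_one, mul_zero]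
  split_ifs with h <;> simp [h, eq_comm]

theorem eq_zero_of_curry_vecMul_eq_zero (hsys : IsSystematic G) (hmds : IsMDS G)
    {m : Fin s} {j : Fin k} {c : Fin α → F} (hc : curry (c ᵥ* G (.inr m)) j = 0) :
    c = 0 := by
  classical
  set f : Fin k → Fin k ⊕ Fin s := update Sum.inl j (.inr m)
  have hf : Injective f := by
    intro a b hab
    by_cases ha : a = j <;> by_cases hb : b = j <;> simp_all [f]
  -- `u` is `c` on the rows of node `m`; on the systematic rows it cancels `c ᵥ* G m` off block `j`
  set u : Fin k × Fin α → F := fun p => if p.1 = j then c p.2 else -(c ᵥ* G (.inr m)) p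
  have hu : u ᵥ* Matrix.of (fun p q : Fin k × Fin α => G (f p.1) p.2 q) = 0 := by
    ext q
    have hsum : (u ᵥ* Matrix.of (fun p q : Fin k × Fin α => G (f p.1) p.2 q)) q
        = ∑ p₁, ((fun p₂ => u (p₁, p₂)) ᵥ* G (f p₁)) q := by
      simp [vecMul, dotProduct, Fintype.sum_prod_type]
    have hoff : ∀ p₁ ∈ ({j}ᶜ : Finset (Fin k)), ((fun p₂ => u (p₁, p₂)) ᵥ* G (f p₁)) q
        = if q.1 = p₁ then u (p₁, q.2) else 0 := by
      intro p₁ hp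
      rw [Finset.mem_compl, Finset.mem_singleton] at hp
      simp [f, hp, vecMul_systematic_apply hsys]
    have hj : (fun p₂ => u (j, p₂)) ᵥ* G (f j) = c ᵥ* G (.inr m) := by simp [f, u]
    rw [hsum, Fintype.sum_eq_add_sum_compl j, Finset.sum_congr rfl hoff, Finset.sum_ite_eq, hj]
    obtain ⟨q₁, q₂⟩ := q
    by_cases hq : q₁ = j
    · subst hq
      simpa using congrFun hc q₂
    · simp [hq, u]
  have hu0 : u = 0 := by
    by_contra hne
    exact (hmds f hf).ne_zero (Matrix.exists_vecMul_eq_zero_iff.mp ⟨u, hne, hu⟩)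
  ext t
  simpa [u] using congrFun hu0 (j, t)

variable (G x) in
def helperBlock (w : Fin α → Fin s) (l j : Fin k) : Matrix (Fin α) (Fin α) F :=
  Matrix.of fun r => curry (x (.inr (w r)) l ᵥ* G (.inr (w r))) j

theorem exists_repair_matrix (hsys : IsSystematic G) (hrep : IsExactRepair G x) (l : Fin k)
    (w : Fin α ↪ Fin s) :
    ∃ (Y : Matrix (Fin α) (Fin α) F) (a : Fin k → Fin α → F),
      Y * helperBlock G x w l l = 1 ∧
      ∀ j, j ≠ l → Y * helperBlock G x w l j = vecMulVec (a j) (x (.inl j) l) := by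
  classical
  obtain ⟨Y, hY⟩ := hrep l (Finset.univ.map w) (by simp)
  have key : ∀ i j t, (if j = l ∧ t = i then (1 : F) else 0) =
      (if j ≠ l then Y i (.inl j) * x (.inl j) l t else 0) +
        (of (fun i r => Y i (.inr (w r))) * helperBlock G x w l j) i t := by
    intro i j t
    have hYit := hY i (j, t)
    simp only [hsys l, vecMul_systematic_apply hsys, Finset.sum_map, mul_ite, mul_zero] at hYit
    rw [hYit, Fintype.sum_eq_single j (fun m hm => by simp [Ne.symm hm]), if_pos (rfl : j = j)]
    rfl
  refine ⟨of fun i r => Y i (.inr (w r)), fun j i => -Y i (.inl j), ?_, fun j hj => ?_⟩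
  · ext i t
    simpa [one_apply, eq_comm] using key i l t
  · ext i t
    rw [vecMulVec_apply, neg_mul, eq_neg_iff_add_eq_zero, add_comm]
    simpa [hj] using (key i j t).symm

theorem exists_curry_vecMul_eq_smul_of_helper (hsys : IsSystematic G) (hmds : IsMDS G)
    (hrep : IsExactRepair G x) {l j : Fin k} (hjl : j ≠ l) (w : Fin α ↪ Fin s) (r : Fin α) :
    ∃ β : F, β ≠ 0 ∧ curry (x (.inr (w r)) l ᵥ* G (.inr (w r))) j = β • x (.inl j) l := by
  obtain ⟨Y, a, hYl, hYj⟩ := exists_repair_matrix hsys hrep l w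
  have hlY : helperBlock G x w l l * Y = 1 := mul_eq_one_comm.mp hYl
  have hj : helperBlock G x w l j = vecMulVec (helperBlock G x w l l *ᵥ a j) (x (.inl j) l) := by
    rw [← mul_vecMulVec, ← hYj j hjl, ← Matrix.mul_assoc, hlY, Matrix.one_mul]
  have hrow : curry (x (.inr (w r)) l ᵥ* G (.inr (w r))) j
      = (helperBlock G x w l l *ᵥ a j) r • x (.inl j) l := by
    ext t
    exact (congrFun (congrFun hj r) t).trans (vecMulVec_apply _ _ _ _)
  refine ⟨_, fun hβ => ?_, hrow⟩
  have hx : x (.inr (w r)) l = 0 :=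
    eq_zero_of_curry_vecMul_eq_zero hsys hmds (by rw [hrow, hβ, zero_smul])
  simpa [mul_apply, helperBlock, hx] using congrFun (congrFun hlY r) r

variable (G x) in
def IsAlignedBy (β : Fin s → Fin k → Fin k → F) : Prop :=
  ∀ m l j, j ≠ l →
    β m l j ≠ 0 ∧ curry (x (.inr m) l ᵥ* G (.inr m)) j = β m l j • x (.inl j) l

theorem exists_isAlignedBy (hsys : IsSystematic G) (hmds : IsMDS G) (hrep : IsExactRepair G x)
    (hs : α ≤ s) : ∃ β, IsAlignedBy G x β := by
  have : ∀ m l j, ∃ β : F, j ≠ l →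
      β ≠ 0 ∧ curry (x (.inr m) l ᵥ* G (.inr m)) j = β • x (.inl j) l := by
    intro m l j
    by_cases hjl : j = l
    · exact ⟨1, fun h => (h hjl).elim⟩
    rcases Nat.eq_zero_or_pos α with rfl | hα
    · exact ⟨1, fun _ => ⟨one_ne_zero, Subsingleton.elim _ _⟩⟩
    obtain ⟨w, r, rfl⟩ := exists_embedding_apply_eq hs hα m
    obtain ⟨β, hβ⟩ := exists_curry_vecMul_eq_smul_of_helper hsys hmds hrep hjl w r
    exact ⟨β, fun _ => hβ⟩
  choose β hβ using this
  exact ⟨β, hβ⟩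

theorem exists_block_scaling_of_isAlignedBy {β : Fin s → Fin k → Fin k → F}
    (hβ : IsAlignedBy G x β) (L : Fin α → Fin k) (m : Fin s) :
    ∃ (lam : Fin α → Fin k → F) (h : Fin α → Fin k → Fin α → F), (∀ i j, lam i j ≠ 0) ∧
      (∀ i j t, (x (.inr m) (L i) ᵥ* G (.inr m)) (j, t) = lam i j * h i j t) ∧
      ∀ i j, j ≠ L i → h i j = x (.inl j) (L i) := by
  classical
  refine ⟨fun i j => if j = L i then 1 else β m (L i) j,
    fun i j => if j = L i then curry (x (.inr m) (L i) ᵥ* G (.inr m)) j else x (.inl j) (L i),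
    fun i j => ?_, fun i j t => ?_, fun i j hj => if_neg hj⟩
  · dsimp only
    split_ifs with h
    exacts [one_ne_zero, (hβ m (L i) j h).1]
  · dsimp only
    split_ifs with h
    · exact (one_mul _).symm
    · exact congrFun (hβ m (L i) j h).2 t

theorem span_curry_vecMul_eq_top (hsys : IsSystematic G) (hrep : IsExactRepair G x)
    (hs : α ≤ s) (l : Fin k) :
    Submodule.span F (Set.range fun m : Fin s => curry (x (.inr m) l ᵥ* G (.inr m)) l) = ⊤ := by
  obtain ⟨Y, -, hY, -⟩ := exists_repair_matrix hsys hrep l (Fin.castLEEmb hs)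
  set P := helperBlock G x (Fin.castLEEmb hs) l l
  have hrows : Submodule.span F (Set.range P.row) ≤
      Submodule.span F (Set.range fun m : Fin s => curry (x (.inr m) l ᵥ* G (.inr m)) l) :=
    Submodule.span_mono (Set.range_subset_iff.mpr fun r => ⟨_, rfl⟩)
  refine eq_top_iff.mpr fun v _ => hrows ?_
  rw [← range_vecMulLinear]
  exact ⟨v ᵥ* Y, by rw [vecMulLinear_apply, vecMul_vecMul, hY, vecMul_one]⟩

theorem curry_vecMul_mem_span_of_relation {β : Fin s → Fin k → Fin k → F}
    (hβ : IsAlignedBy G x β) {L : Fin α → Fin k} (hL : Injective L) {m : Fin s}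
    {d : Fin α → F} (hd : ∑ i, d i • x (.inr m) (L i) = 0) {i₀ : Fin α} (hi₀ : d i₀ ≠ 0) :
    curry (x (.inr m) (L i₀) ᵥ* G (.inr m)) (L i₀) ∈
      Submodule.span F (Set.range fun i : {i // i ≠ i₀} => x (.inl (L i₀)) (L i)) := by
  classical
  have hsum : ∑ i, d i • curry (x (.inr m) (L i) ᵥ* G (.inr m)) (L i₀) = 0 := by
    rw [← curry_sum_smul_vecMul, hd, zero_vecMul]; rfl
  rw [← Finset.add_sum_erase _ _ (Finset.mem_univ i₀), add_eq_zero_iff_eq_neg] at hsum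
  have hrest : ∀ i ∈ Finset.univ.erase i₀, d i • curry (x (.inr m) (L i) ᵥ* G (.inr m)) (L i₀)
      = (d i * β m (L i) (L i₀)) • x (.inl (L i₀)) (L i) := by
    intro i hi
    rw [(hβ m (L i) (L i₀) (hL.ne (Finset.ne_of_mem_erase hi)).symm).2, smul_smul]
  rw [Finset.sum_congr rfl hrest] at hsum
  rw [← inv_smul_smul₀ hi₀ (curry _ _), hsum]
  exact Submodule.smul_mem _ _ (Submodule.neg_mem _ (Submodule.sum_mem _ fun i hi =>
    Submodule.smul_mem _ _ (Submodule.subset_span ⟨⟨i, Finset.ne_of_mem_erase hi⟩, rfl⟩)))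

theorem linearIndependent_repair_vectors (hsys : IsSystematic G) (hmds : IsMDS G)
    (hrep : IsExactRepair G x) (hs : α ≤ s) {β : Fin s → Fin k → Fin k → F}
    (hβ : IsAlignedBy G x β) {L : Fin α → Fin k} (hL : Injective L) {j₀ : Fin k}
    (hj₀ : ∀ i, L i ≠ j₀) (m : Fin s) :
    LinearIndependent F fun i => x (.inr m) (L i) := by
  rw [Fintype.linearIndependent_iff]
  intro d hd i₀
  by_contra hi₀
  -- through the block `j₀`, which no `L i` repairs, the relation `d` transfers to every node
  set d' : Fin s → Fin α → F := fun m' i => d i * β m (L i) j₀ / β m' (L i) j₀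
  have htransfer : ∀ m', ∑ i, d' m' i • x (.inr m') (L i) = 0 := by
    intro m'
    refine eq_zero_of_curry_vecMul_eq_zero hsys hmds (m := m') (j := j₀) ?_
    calc curry ((∑ i, d' m' i • x (.inr m') (L i)) ᵥ* G (.inr m')) j₀
        = ∑ i, d' m' i • curry (x (.inr m') (L i) ᵥ* G (.inr m')) j₀ :=
          curry_sum_smul_vecMul _ _ _ _
      _ = ∑ i, d i • curry (x (.inr m) (L i) ᵥ* G (.inr m)) j₀ := by
          refine Finset.sum_congr rfl fun i _ => ?_
          obtain ⟨hβ'0, hβ'⟩ := hβ m' (L i) j₀ (hj₀ i).symm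
          rw [hβ', (hβ m (L i) j₀ (hj₀ i).symm).2, smul_smul, smul_smul]
          congr 1
          exact div_mul_cancel₀ _ hβ'0
      _ = curry ((∑ i, d i • x (.inr m) (L i)) ᵥ* G (.inr m)) j₀ :=
          (curry_sum_smul_vecMul _ _ _ _).symm
      _ = 0 := by rw [hd, zero_vecMul]; rfl
  have hd'₀ : ∀ m', d' m' i₀ ≠ 0 := fun m' =>
    div_ne_zero (mul_ne_zero hi₀ (hβ m (L i₀) j₀ (hj₀ i₀).symm).1)
      (hβ m' (L i₀) j₀ (hj₀ i₀).symm).1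
  have hle : (⊤ : Submodule F (Fin α → F)) ≤
      Submodule.span F (Set.range fun i : {i // i ≠ i₀} => x (.inl (L i₀)) (L i)) := by
    rw [← span_curry_vecMul_eq_top hsys hrep hs (L i₀), Submodule.span_le]
    rintro _ ⟨m', rfl⟩
    exact curry_vecMul_mem_span_of_relation hβ hL (htransfer m') (hd'₀ m')
  have hrank := (Submodule.finrank_mono hle).trans (finrank_range_le_card _)
  rw [finrank_top, Module.finrank_fin_fun, Fintype.card_subtype_compl, Fintype.card_fin,
    Fintype.card_unique] at hrank
  have := i₀.pos
  omega

end

/-- Canonical form for `k ≥ α + 1`: every linear `(k,α)` MSR exact-regenerating code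
(systematic nodes `Fin k`, non-systematic nodes `Fin s`; node `m` passes the combination
`x m l` of its rows to regenerate systematic node `l`, helpers being the surviving `k-1`
systematic nodes plus any `α` non-systematic ones) has an equivalent code — same stored row
spaces, same passed vectors — in which each non-systematic block decomposes as
`G^{(m)}_j = Λ^{(m)}_j H^{(m)}_j` with `Λ^{(m)}_j` invertible diagonal and the direction
rows `h^{(m)}_{i,j} = h_{i,j}` independent of `m` for `j ≠ i`, and each non-systematic node
passes the `i`-th row of its matrix for regeneration of systematic node `i ≤ α`. -/
theorem statement13 {F : Type*} [Field F] {k α s : ℕ}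
    (hk : α + 1 ≤ k) (hs : α ≤ s)
    (G : (Fin k ⊕ Fin s) → Matrix (Fin α) (Fin k × Fin α) F)
    (x : (Fin k ⊕ Fin s) → Fin k → Fin α → F)
    (hsys : ∀ (m : Fin k) (i : Fin α) (q : Fin k × Fin α),
      G (Sum.inl m) i q = if q.1 = m ∧ q.2 = i then 1 else 0)
    (hrecon : ∀ f : Fin k → (Fin k ⊕ Fin s), Function.Injective f →
      IsUnit (Matrix.det (Matrix.of fun p q : Fin k × Fin α => G (f p.1) p.2 q)))
    (hrepair : ∀ (l : Fin k) (D : Finset (Fin s)), D.card = α →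
      ∃ Y : Fin α → (Fin k ⊕ Fin s) → F, ∀ (i : Fin α) (q : Fin k × Fin α),
        G (Sum.inl l) i q =
          (∑ m : Fin k, if m ≠ l then
              Y i (Sum.inl m) * ∑ j, x (Sum.inl m) l j * G (Sum.inl m) j q else 0)
            + ∑ m ∈ D, Y i (Sum.inr m) * ∑ j, x (Sum.inr m) l j * G (Sum.inr m) j q) :
    ∃ (G' : (Fin k ⊕ Fin s) → Matrix (Fin α) (Fin k × Fin α) F)
      (x' : (Fin k ⊕ Fin s) → Fin k → Fin α → F)
      (hcom : Fin α → Fin k → Fin α → F),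
      (∀ m, Submodule.span F (Set.range fun i : Fin α => fun q => G' m i q) =
        Submodule.span F (Set.range fun i : Fin α => fun q => G m i q)) ∧
      (∀ m l q, ∑ j, x' m l j * G' m j q = ∑ j, x m l j * G m j q) ∧
      (∀ m : Fin s, ∃ (lam : Fin α → Fin k → F) (h : Fin α → Fin k → Fin α → F),
        (∀ i j, lam i j ≠ 0) ∧
        (∀ (i : Fin α) (j : Fin k) (t : Fin α),
          G' (Sum.inr m) i (j, t) = lam i j * h i j t) ∧
        (∀ (i : Fin α) (j : Fin k), (j : ℕ) ≠ (i : ℕ) → h i j = hcom i j)) ∧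
      (∀ (m : Fin s) (i : Fin k) (hi : (i : ℕ) < α),
        x' (Sum.inr m) i = Pi.single (⟨(i : ℕ), hi⟩ : Fin α) 1) := by
  classical
  obtain ⟨β, hβ⟩ := exists_isAlignedBy hsys hrecon hrepair hs
  set L : Fin α → Fin k := Fin.castLE (by omega)
  -- the new rows of node `m` are the vectors it passes for the repair of nodes `0, …, α - 1`
  set X : Fin s → Matrix (Fin α) (Fin α) F := fun m => Matrix.of fun i => x (.inr m) (L i)
  have hX : ∀ m, IsUnit (X m).det := fun m =>
    (isUnit_iff_isUnit_det _).mp <| linearIndependent_rows_iff_isUnit.mp <|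
      linearIndependent_repair_vectors hsys hrecon hrepair hs hβ (Fin.castLE_injective _)
        (j₀ := ⟨α, hk⟩) (fun i => by simp [Fin.ext_iff]; omega) m
  refine ⟨Sum.elim (G ∘ .inl) fun m => X m * G (.inr m),
    Sum.elim (x ∘ .inl) fun m l => x (.inr m) l ᵥ* (X m)⁻¹, fun i j => x (.inl j) (L i),
    ?_, ?_, fun m => ?_, fun m i hi => ?_⟩
  · rintro (m | m)
    · rfl
    · exact span_range_row_mul_of_isUnit (hX m) _
  · rintro (m | m) l q
    · rfl
    · change ((x (.inr m) l ᵥ* (X m)⁻¹) ᵥ* (X m * G (.inr m))) q =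
        (x (.inr m) l ᵥ* G (.inr m)) q
      rw [vecMul_vecMul, nonsing_inv_mul_cancel_left _ _ (hX m)]
  · obtain ⟨lam, h, hlam, hG, hh⟩ := exists_block_scaling_of_isAlignedBy hβ L m
    exact ⟨lam, h, hlam, hG, fun i j hji => hh i j fun h => hji (by simp [h, L])⟩
  · have hrow : x (.inr m) i = Pi.single ⟨i, hi⟩ 1 ᵥ* X m := by
      rw [single_one_vecMul]; rfl
    simp only [Sum.elim_inr]
    rw [hrow, vecMul_vecMul, mul_nonsing_inv _ (hX m), vecMul_one]
end

section
/- (Nonzero coefficients) In a linear (k,α) MSR exact-regenerating code in canonical form with k ≥ α + 2 and β = 1, for every non-systematic node m, every l ∈ {α+1,…,k}, and every i ∈ {1,…,α}, the coefficient x^{(m,l)}_i (the i-th coordinate of the combination vector x^{(m,l)} with v^{(m,l)} = x^{(m,l)} G^{(m)}) is nonzero. -/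
/-!
Repairing systematic node `l` from the other systematic nodes and `α` parity nodes `D` forces two
things. On block `l` the vectors passed by `D` combine to the identity, so they are linearly
independent. On any other block `t` the systematic nodes contribute only along the vector
`x^{(t,l)}` that node `t` passes, so the parity contributions must cancel it: every vector passed
for `l` is, on block `t`, a multiple of `x^{(t,l)}` (interference alignment). In canonical form row
`j` of a parity node is the vector it passes for systematic node `j`, so on a block `t ≥ α` it is
a multiple of `x^{(t,j)}`, and these `α` vectors form a basis.

Now take `l ≥ α` and a second block `l₂ ≥ α`, `l₂ ≠ l` (this is where `k ≥ α + 2` enters). In the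
basis `x^{(l₂,j)}`, the vector node `n` passes for `l` has coordinates `x^{(n,l)}_j` up to nonzero
factors, and it is a multiple of the fixed vector `x^{(l₂,l)}`. So if `x^{(m,l)}_i = 0` for one
parity node `m`, then `x^{(n,l)}_i = 0` for all `n`; but then the `α` independent vectors passed
for `l` on block `l` lie in the span of the `α - 1` vectors `x^{(l,j)}`, `j ≠ i`.
-/

open Matrix

section LinearAlgebra

variable {F : Type*} [Field F] {ι : Type*} [Fintype ι]

theorem Matrix.vecMul_eq_sum_of_row_eq_smul {ι' : Type*} {B : Matrix ι ι' F} {b : ι → F}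
    {z : ι → ι' → F} (h : ∀ j, B j = b j • z j) (v : ι → F) :
    v ᵥ* B = ∑ j, (v j * b j) • z j := by
  simp_rw [vecMul_eq_sum, h, smul_smul]

variable [DecidableEq ι] {B : Matrix ι ι F} {b : ι → F} {z : ι → ι → F}

theorem IsUnit.ne_zero_of_row_eq_smul (hB : IsUnit B) (h : ∀ j, B j = b j • z j) (j : ι) :
    b j ≠ 0 := by
  intro hb
  apply (linearIndependent_rows_of_isUnit hB).ne_zero j
  simp [Matrix.row, h j, hb]

theorem IsUnit.linearIndependent_of_row_eq_smul (hB : IsUnit B) (h : ∀ j, B j = b j • z j) :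
    LinearIndependent F z := by
  convert (linearIndependent_rows_of_isUnit hB).units_smul
    fun j => Units.mk0 (b j)⁻¹ (inv_ne_zero (hB.ne_zero_of_row_eq_smul h j)) using 1
  funext j
  rw [Pi.smul_apply', Units.smul_def, Units.val_mk0, Matrix.row, h j, smul_smul,
    inv_mul_cancel₀ (hB.ne_zero_of_row_eq_smul h j), one_smul]

end LinearAlgebra

theorem LinearIndependent.coeff_eq_zero_of_sum_smul_eq_smul {F V ι : Type*} [Field F]
    [AddCommGroup V] [Module F V] [Fintype ι] {z : ι → V} (hz : LinearIndependent F z)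
    {w : V} {a a' : ι → F} {c c' : F} (ha : ∑ j, a j • z j = c • w)
    (ha' : ∑ j, a' j • z j = c' • w) (ha0 : a ≠ 0) {i : ι} (hi : a i = 0) : a' i = 0 := by
  have hc : c ≠ 0 := by
    rintro rfl
    exact ha0 (funext (Fintype.linearIndependent_iff.mp hz a (by simpa using ha)))
  have h : ∑ j, a' j • z j = ∑ j, (c' / c * a j) • z j := by
    simp_rw [← smul_smul, ← Finset.smul_sum, ha, ha', smul_smul, div_mul_cancel₀ _ hc]
  rw [Fintype.linearIndependent_iffₛ.mp hz _ _ h i, hi, mul_zero]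

namespace RegeneratingCode

section

variable {F : Type*} [Field F] {κ σ : Type*} [DecidableEq κ] {α : ℕ}
  {G : κ ⊕ σ → Matrix (Fin α) (κ × Fin α) F} {x : κ ⊕ σ → κ → Fin α → F}

def IsSystematic (G : κ ⊕ σ → Matrix (Fin α) (κ × Fin α) F) : Prop :=
  ∀ (m : κ) (i : Fin α) (q : κ × Fin α),
    G (Sum.inl m) i q = if q.1 = m ∧ q.2 = i then 1 else 0

def block (G : κ ⊕ σ → Matrix (Fin α) (κ × Fin α) F) (n : κ ⊕ σ) (t : κ) :
    Matrix (Fin α) (Fin α) F :=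
  of fun j j' => G n j (t, j')

theorem vecMul_apply_of_isSystematic (hsys : IsSystematic G) (c : Fin α → F) (m : κ)
    (q : κ × Fin α) : (c ᵥ* G (Sum.inl m)) q = if q.1 = m then c q.2 else 0 := by
  rw [IsSystematic] at hsys
  by_cases hq : q.1 = m <;> simp [vecMul, dotProduct, hsys, hq]

variable [Fintype κ]

def IsMDS (G : κ ⊕ σ → Matrix (Fin α) (κ × Fin α) F) : Prop :=
  ∀ f : κ → κ ⊕ σ, Function.Injective f →
    IsUnit (Matrix.of fun p q : κ × Fin α => G (f p.1) p.2 q).det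

/-- Node `n` helps to repair systematic node `l` by passing `x n l ᵥ* G n`; the repair may use the
other systematic nodes and any `α` parity nodes `D`. -/
def RepairsSystematic (G : κ ⊕ σ → Matrix (Fin α) (κ × Fin α) F)
    (x : κ ⊕ σ → κ → Fin α → F) : Prop :=
  ∀ (l : κ) (D : Finset σ), D.card = α →
    ∃ Y : Fin α → κ ⊕ σ → F, ∀ (i : Fin α) (q : κ × Fin α),
      G (Sum.inl l) i q =
        (∑ m : κ, if m ≠ l then
            Y i (Sum.inl m) * (x (Sum.inl m) l ᵥ* G (Sum.inl m)) q else 0)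
          + ∑ m ∈ D, Y i (Sum.inr m) * (x (Sum.inr m) l ᵥ* G (Sum.inr m)) q

def passedMatrix (G : κ ⊕ σ → Matrix (Fin α) (κ × Fin α) F) (x : κ ⊕ σ → κ → Fin α → F)
    (D : Finset σ) (l t : κ) : Matrix D (Fin α) F :=
  of fun d => x (Sum.inr d) l ᵥ* block G (Sum.inr d) t

theorem isUnit_block (hsys : IsSystematic G) (hmds : IsMDS G) (n : σ) (t : κ) :
    IsUnit (block G (Sum.inr n) t) := by
  rw [IsSystematic] at hsys
  rw [isUnit_iff_isUnit_det, isUnit_iff_ne_zero, Ne, ← exists_mulVec_eq_zero_iff]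
  rintro ⟨v, hv0, hv⟩
  obtain ⟨j, hj⟩ := Function.ne_iff.mp hv0
  let f : κ → κ ⊕ σ := Function.update Sum.inl t (Sum.inr n)
  have hf : Function.Injective f := by
    intro a b hab
    by_cases ha : a = t <;> by_cases hb : b = t <;> simp_all [f]
  refine (hmds f hf).ne_zero (exists_mulVec_eq_zero_iff.mp
    ⟨fun q => if q.1 = t then v q.2 else 0, Function.ne_iff.mpr ⟨(t, j), by simpa using hj⟩, ?_⟩)
  funext ⟨p, i⟩
  by_cases hp : p = t
  · subst hp
    simpa [f, mulVec, dotProduct, Fintype.sum_prod_type, block] using congrFun hv i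
  · simp [f, mulVec, dotProduct, Fintype.sum_prod_type, hp, hsys, Ne.symm hp]

theorem exists_finset_mem_card_eq [Fintype σ] (n : σ) (hα : 0 < α) (hs : α ≤ Fintype.card σ) :
    ∃ D : Finset σ, n ∈ D ∧ D.card = α := by
  obtain ⟨D, hnD, hD⟩ := Finset.exists_superset_card_eq (s := {n}) (by simpa) hs
  exact ⟨D, hnD (Finset.mem_singleton_self n), hD⟩

theorem exists_repair_matrices [DecidableEq σ] (hsys : IsSystematic G)
    (hrep : RepairsSystematic G x) (l : κ) {D : Finset σ} (hD : D.card = α) :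
    ∃ Y : Matrix (Fin α) D F, passedMatrix G x D l l * Y = 1 ∧
      ∀ t ≠ l, ∃ a : Fin α → F, Y * passedMatrix G x D l t = vecMulVec a (x (Sum.inl t) l) := by
  obtain ⟨Y, hY⟩ := hrep l D hD
  have key : ∀ i t j', ((of fun i (d : D) => Y i (Sum.inr d)) * passedMatrix G x D l t) i j' =
      (if t = l ∧ j' = i then 1 else 0)
        - if t ≠ l then Y i (Sum.inl t) * x (Sum.inl t) l j' else 0 := by
    intro i t j'
    have hrow := hY i (t, j')
    rw [hsys l i (t, j'), Finset.sum_eq_single t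
      (fun m _ hm => by simp [vecMul_apply_of_isSystematic hsys, Ne.symm hm]) (by simp)] at hrow
    simp only [vecMul_apply_of_isSystematic hsys, if_pos] at hrow
    exact (Finset.sum_coe_sort D _).trans (eq_sub_of_add_eq' hrow.symm)
  refine ⟨of fun i d => Y i (Sum.inr d), ?_, fun t ht => ⟨fun i => -Y i (Sum.inl t), ?_⟩⟩
  · rw [mul_eq_one_comm_of_equiv (D.equivFinOfCardEq hD)]
    ext i j'
    rw [key, one_apply]
    simp [eq_comm]
  · ext i j'
    rw [key, vecMulVec_apply]
    simp [ht]

theorem linearIndependent_passed (hsys : IsSystematic G) (hrep : RepairsSystematic G x) (l : κ)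
    {D : Finset σ} (hD : D.card = α) :
    LinearIndependent F fun d : D => x (Sum.inr d) l ᵥ* block G (Sum.inr d) l := by
  classical
  obtain ⟨Y, hVY, -⟩ := exists_repair_matrices hsys hrep l hD
  rw [Fintype.linearIndependent_iff]
  intro g hg
  have hgV : g ᵥ* passedMatrix G x D l l = 0 := by rw [vecMul_eq_sum]; exact hg
  rw [← funext_iff, ← vecMul_one g, ← hVY, ← vecMul_vecMul, hgV, zero_vecMul]
  rfl

theorem exists_vecMul_block_eq_smul [Fintype σ] (hsys : IsSystematic G)
    (hrep : RepairsSystematic G x) (hα : 0 < α) (hs : α ≤ Fintype.card σ) (n : σ) {l t : κ}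
    (ht : t ≠ l) : ∃ c : F, x (Sum.inr n) l ᵥ* block G (Sum.inr n) t = c • x (Sum.inl t) l := by
  classical
  obtain ⟨D, hnD, hD⟩ := exists_finset_mem_card_eq n hα hs
  obtain ⟨Y, hVY, hYV⟩ := exists_repair_matrices hsys hrep l hD
  obtain ⟨a, ha⟩ := hYV t ht
  have hV : passedMatrix G x D l t = vecMulVec (passedMatrix G x D l l *ᵥ a) (x (Sum.inl t) l) := by
    rw [← mul_vecMulVec, ← ha, ← Matrix.mul_assoc, hVY, Matrix.one_mul]
  exact ⟨(passedMatrix G x D l l *ᵥ a) ⟨n, hnD⟩, congrFun hV ⟨n, hnD⟩⟩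

theorem combination_ne_zero [Fintype σ] (hsys : IsSystematic G) (hrep : RepairsSystematic G x)
    (hα : 0 < α) (hs : α ≤ Fintype.card σ) (n : σ) (l : κ) : x (Sum.inr n) l ≠ 0 := by
  obtain ⟨D, hnD, hD⟩ := exists_finset_mem_card_eq n hα hs
  intro h
  apply (linearIndependent_passed hsys hrep l hD).ne_zero ⟨n, hnD⟩
  simp [h]

end

section Canonical

variable {F : Type*} [Field F] {k s α : ℕ} {G : Fin k ⊕ Fin s → Matrix (Fin α) (Fin k × Fin α) F}
  {x : Fin k ⊕ Fin s → Fin k → Fin α → F}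

def IsCanonical (x : Fin k ⊕ Fin s → Fin k → Fin α → F) : Prop :=
  ∀ (m : Fin s) (i : Fin k) (hi : (i : ℕ) < α), x (Sum.inr m) i = Pi.single ⟨i, hi⟩ 1

theorem exists_block_row_eq_smul (hsys : IsSystematic G) (hrep : RepairsSystematic G x)
    (hcanon : IsCanonical x) (hs : α ≤ s) (hαk : α ≤ k) (n : Fin s) {t : Fin k}
    (ht : α ≤ (t : ℕ)) :
    ∃ b : Fin α → F, ∀ j, block G (Sum.inr n) t j = b j • x (Sum.inl t) (Fin.castLE hαk j) := by
  have hj : ∀ j : Fin α, t ≠ Fin.castLE hαk j := fun j h => by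
    have := congrArg Fin.val h
    simp at this
    omega
  choose b hb using fun j : Fin α =>
    exists_vecMul_block_eq_smul hsys hrep j.pos (by rwa [Fintype.card_fin]) n (hj j)
  refine ⟨b, fun j => ?_⟩
  rw [← hb j, hcanon n _ j.2]
  exact (single_one_vecMul j _).symm

theorem exists_coeff_ne_zero (hsys : IsSystematic G) (hrep : RepairsSystematic G x)
    (hcanon : IsCanonical x) (hs : α ≤ s) (hαk : α ≤ k) {l : Fin k} (hl : α ≤ (l : ℕ))
    (i : Fin α) : ∃ n, x (Sum.inr n) l i ≠ 0 := by
  classical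
  by_contra! h
  obtain ⟨D, -, hD⟩ := Finset.exists_subset_card_eq (s := (Finset.univ : Finset (Fin s)))
    (by simpa using hs)
  let u : Fin α → Fin α → F := fun j => x (Sum.inl l) (Fin.castLE hαk j)
  have hspan : Set.range (fun d : D => x (Sum.inr d) l ᵥ* block G (Sum.inr d) l) ≤
      Submodule.span F ((Finset.univ.erase i).image u : Set (Fin α → F)) := by
    rintro _ ⟨d, rfl⟩
    dsimp only
    obtain ⟨b, hb⟩ := exists_block_row_eq_smul hsys hrep hcanon hs hαk d hl
    rw [vecMul_eq_sum_of_row_eq_smul hb, ← Finset.sum_erase_add _ _ (Finset.mem_univ i), h d,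
      zero_mul, zero_smul, add_zero]
    exact Submodule.sum_mem _ fun j hj =>
      Submodule.smul_mem _ _ (Submodule.subset_span (Finset.mem_image_of_mem u hj))
  have hcard := linearIndependent_le_span_aux' _ (linearIndependent_passed hsys hrep l hD) _ hspan
  simp only [Fintype.card_coe, Finset.coe_sort_coe, hD] at hcard
  have := (Finset.card_image_le (s := Finset.univ.erase i) (f := u)).trans_eq
    (Finset.card_erase_of_mem (Finset.mem_univ i))
  simp only [Finset.card_univ, Fintype.card_fin] at this
  have := i.pos
  omega

theorem coeff_eq_zero_of_coeff_eq_zero (hsys : IsSystematic G) (hmds : IsMDS G)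
    (hrep : RepairsSystematic G x) (hcanon : IsCanonical x) (hs : α ≤ s) (hαk : α ≤ k)
    {l l₂ : Fin k} (hl₂ : α ≤ (l₂ : ℕ)) (hne : l₂ ≠ l) {m : Fin s} {i : Fin α}
    (hm : x (Sum.inr m) l i = 0) (n : Fin s) : x (Sum.inr n) l i = 0 := by
  have hs' : α ≤ Fintype.card (Fin s) := by rwa [Fintype.card_fin]
  choose b hb using fun n => exists_block_row_eq_smul hsys hrep hcanon hs hαk n hl₂
  have hb0 : ∀ n, b n i ≠ 0 := fun n =>
    (isUnit_block hsys hmds n l₂).ne_zero_of_row_eq_smul (hb n) i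
  have hpass : ∀ n, ∃ c : F, ∑ j, (x (Sum.inr n) l j * b n j) • x (Sum.inl l₂) (Fin.castLE hαk j)
      = c • x (Sum.inl l₂) l := fun n => by
    rw [← vecMul_eq_sum_of_row_eq_smul (hb n)]
    exact exists_vecMul_block_eq_smul hsys hrep i.pos hs' n hne
  obtain ⟨cm, hcm⟩ := hpass m
  obtain ⟨cn, hcn⟩ := hpass n
  have hxm : (fun j => x (Sum.inr m) l j * b m j) ≠ 0 := by
    obtain ⟨j, hj⟩ := Function.ne_iff.mp (combination_ne_zero hsys hrep i.pos hs' m l)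
    exact Function.ne_iff.mpr ⟨j, mul_ne_zero hj
      ((isUnit_block hsys hmds m l₂).ne_zero_of_row_eq_smul (hb m) j)⟩
  have hz := (isUnit_block hsys hmds m l₂).linearIndependent_of_row_eq_smul (hb m)
  have := hz.coeff_eq_zero_of_sum_smul_eq_smul hcm hcn hxm (i := i) (by simp [hm])
  exact (mul_eq_zero.mp this).resolve_right (hb0 n)

end Canonical

end RegeneratingCode

open RegeneratingCode in
/-- Nonzero coefficients: for `k ≥ α + 2`, in a linear `(k,α)` MSR exact-regenerating code
in canonical form (node `m` passes its `i`-th row for regeneration of systematic node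
`i ≤ α`), every coordinate of the combination vector `x^{(m,l)}` is nonzero for every
non-systematic node `m` and every `l ∈ {α+1,…,k}`. -/
theorem statement15 {F : Type*} [Field F] {k α s : ℕ}
    (hk : α + 2 ≤ k) (hs : α ≤ s)
    (G : (Fin k ⊕ Fin s) → Matrix (Fin α) (Fin k × Fin α) F)
    (x : (Fin k ⊕ Fin s) → Fin k → Fin α → F)
    (hsys : ∀ (m : Fin k) (i : Fin α) (q : Fin k × Fin α),
      G (Sum.inl m) i q = if q.1 = m ∧ q.2 = i then 1 else 0)
    (hrecon : ∀ f : Fin k → (Fin k ⊕ Fin s), Function.Injective f →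
      IsUnit (Matrix.det (Matrix.of fun p q : Fin k × Fin α => G (f p.1) p.2 q)))
    (hcanon : ∀ (m : Fin s) (i : Fin k) (hi : (i : ℕ) < α),
      x (Sum.inr m) i = Pi.single (⟨(i : ℕ), hi⟩ : Fin α) 1)
    (hrepair : ∀ (l : Fin k) (D : Finset (Fin s)), D.card = α →
      ∃ Y : Fin α → (Fin k ⊕ Fin s) → F, ∀ (i : Fin α) (q : Fin k × Fin α),
        G (Sum.inl l) i q =
          (∑ m : Fin k, if m ≠ l then
              Y i (Sum.inl m) * ∑ j, x (Sum.inl m) l j * G (Sum.inl m) j q else 0)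
            + ∑ m ∈ D, Y i (Sum.inr m) * ∑ j, x (Sum.inr m) l j * G (Sum.inr m) j q) :
    ∀ (m : Fin s) (l : Fin k), α ≤ (l : ℕ) → ∀ i : Fin α, x (Sum.inr m) l i ≠ 0 := by
  intro m l hl i hm
  have hαk : α ≤ k := by omega
  obtain ⟨l₂, hl₂, hne⟩ : ∃ l₂ : Fin k, α ≤ (l₂ : ℕ) ∧ l₂ ≠ l := by
    by_cases h : (l : ℕ) = α
    · exact ⟨⟨α + 1, by omega⟩, by simp, fun h' => by simp [Fin.ext_iff] at h'; omega⟩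
    · exact ⟨⟨α, by omega⟩, le_rfl, fun h' => h (by simp [Fin.ext_iff] at h'; omega)⟩
  obtain ⟨n, hn⟩ := exists_coeff_ne_zero hsys hrepair hcanon hs hαk hl i
  exact hn (coeff_eq_zero_of_coeff_eq_zero hsys hrecon hrepair hcanon hs hαk hl₂ hne hm n)
end

section
/- (Non-achievability for k ≥ α + 3) For α ≥ 2 and k ≥ α + 3, there is no linear exact-regenerating code over any finite field with B = kα, per-node storage α, β = 1, and d = α + k − 1 that exactly regenerates all systematic nodes. Equivalently, the repair bandwidth lower bound d = α + k − 1 with β = 1 is not achievable when k ≥ α + 3. -/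
/-!
Fix `α` non-systematic helpers. Repairing a systematic node `l` from them and the other
systematic nodes forces, for every `j ≠ l`, the components along `j` of what the helpers send
to be parallel (interference alignment), while their components along `l` are independent.
After normalising by one helper `m₀`, the direction `u l m₀` of the aligned interference for
`l` is an eigenvector of every transfer matrix `C m j' * (C m j)⁻¹` with `l ∉ {j, j'}`, and any
`α` of these directions are linearly independent. For `k ≥ α + 3` a transfer matrix thus has
`α + 1` eigenvectors in general position, so it is scalar; but then, when `j'` is repaired,
helpers `m₀` and `m` send parallel components along `j'`, contradicting independence.
-/

open Finset Matrix Module Submodule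

theorem Module.End.exists_eq_smul_one_of_linearIndepOn_of_mem_span_singleton
    {K V ι : Type*} [Field K] [AddCommGroup V] [Module K V] [FiniteDimensional K V]
    {f : Module.End K V} {v : ι → V} {T : Finset ι} (hT : finrank K V < #T)
    (hv : ∀ S ⊆ T, #S ≤ finrank K V → LinearIndepOn K v S)
    (hf : ∀ i ∈ T, f (v i) ∈ K ∙ v i) : ∃ μ : K, f = μ • 1 := by
  classical
  obtain ⟨t, ht⟩ : T.Nonempty := card_pos.mp (by omega)
  obtain ⟨S, hST, hS⟩ := exists_subset_card_eq (s := T.erase t) (n := finrank K V)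
    (by rw [card_erase_of_mem ht]; omega)
  have htS : t ∉ S := fun h => by simpa using hST h
  have hST' : S ⊆ T := hST.trans (erase_subset _ _)
  choose! μ hμ using fun i hi => mem_span_singleton.mp (hf i hi)
  have hS_indep : LinearIndepOn K v S := hv S hST' hS.le
  have hspan : span K (v '' S) = ⊤ := by
    rw [Set.image_eq_range]
    exact hS_indep.span_eq_top_of_card_eq_finrank' (by simpa using hS)
  obtain ⟨c, hc⟩ := (mem_span_image_finset_iff_exists_fun' K).mp
    (hspan ▸ mem_top : v t ∈ span K (v '' S))
  have hc_ne : ∀ i ∈ S, c i ≠ 0 := by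
    intro i hi hci
    have htSi : t ∉ S.erase i := fun h => htS (mem_of_mem_erase h)
    have hR : LinearIndepOn K v (insert t (S.erase i) : Finset ι) :=
      hv _ (insert_subset ht ((erase_subset _ _).trans hST'))
        (by rw [card_insert_of_notMem htSi, card_erase_add_one hi, hS])
    rw [coe_insert, linearIndepOn_insert htSi] at hR
    refine hR.2 ((mem_span_image_finset_iff_exists_fun' K).mpr ⟨c, ?_⟩)
    rw [← hc, ← add_sum_erase _ _ hi, hci, zero_smul, zero_add]
  have hcomb : ∑ i ∈ S, (c i * (μ i - μ t)) • v i = 0 :=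
    calc ∑ i ∈ S, (c i * (μ i - μ t)) • v i
        = f (∑ i ∈ S, c i • v i) - μ t • ∑ i ∈ S, c i • v i := by
          rw [map_sum, smul_sum, ← sum_sub_distrib]
          refine sum_congr rfl fun i hi => ?_
          rw [map_smul, ← hμ i (hST' hi), smul_smul, smul_smul, ← sub_smul, mul_sub,
            mul_comm (μ t)]
      _ = 0 := by rw [hc, ← hμ t ht, sub_self]
  refine ⟨μ t, LinearMap.ext_on hspan ?_⟩
  rintro _ ⟨i, hi, rfl⟩
  have hμi := linearIndepOn_finset_iff.mp hS_indep _ hcomb i hi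
  rw [mul_eq_zero, sub_eq_zero] at hμi
  rw [← hμ i (hST' hi), hμi.resolve_left (hc_ne i hi)]
  rfl

namespace Matrix

variable {n K : Type*} [Fintype n] [DecidableEq n] [Field K]

theorem span_singleton_inv_mulVec_eq {M : Matrix n n K} (hM : IsUnit M.det) {u x : n → K}
    (hu : u ≠ 0) (h : M *ᵥ u ∈ K ∙ x) : K ∙ (M⁻¹ *ᵥ x) = K ∙ u := by
  obtain ⟨a, ha⟩ := mem_span_singleton.mp h
  have ha0 : a ≠ 0 := by
    rintro rfl
    exact hu (eq_zero_of_mulVec_eq_zero hM.ne_zero (by rw [← ha, zero_smul]))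
  have hx : x = a⁻¹ • M *ᵥ u := by rw [← ha, smul_smul, inv_mul_cancel₀ ha0, one_smul]
  rw [hx, mulVec_smul, mulVec_mulVec, nonsing_inv_mul _ hM, one_mulVec,
    span_singleton_smul_eq (inv_ne_zero ha0).isUnit]

theorem row_mem_span_singleton_of_mul_eq_vecMulVec {Y V W : Matrix n n K} (hYV : Y * V = 1)
    {a b : n → K} (hYW : Y * W = vecMulVec a b) (i : n) : W i ∈ K ∙ b := by
  have hW : W = vecMulVec (V *ᵥ a) b := by
    rw [← mul_vecMulVec, ← hYW, ← Matrix.mul_assoc, mul_eq_one_comm.mp hYV, Matrix.one_mul]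
  exact mem_span_singleton.mpr ⟨(V *ᵥ a) i, by rw [hW]; ext; simp [vecMulVec]⟩

end Matrix

/-- Canonical form of the repair data of a code: `C m j` is the component along systematic
node `j` of the `m`-th non-systematic helper, normalised so that helper `m₀` has identity
components, and `u l m` is the vector that helper `m` applies to its contents when systematic
node `l` is repaired. -/
structure AlignedRepair (F : Type*) [Field F] (k α : ℕ) where
  C : Fin α → Fin k → Matrix (Fin α) (Fin α) F
  u : Fin k → Fin α → Fin α → F
  m₀ : Fin α
  isUnit_det_C : ∀ m j, IsUnit (C m j).det
  C_m₀ : ∀ j, C m₀ j = 1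
  mulVec_mem_span : ∀ l j m, j ≠ l → C m j *ᵥ u l m ∈ F ∙ u l m₀
  linearIndependent : ∀ l, LinearIndependent F fun m => C m l *ᵥ u l m

namespace AlignedRepair

variable {F : Type*} [Field F] {k α : ℕ} (A : AlignedRepair F k α)

theorem u_ne_zero (l : Fin k) (m : Fin α) : A.u l m ≠ 0 := fun h =>
  (A.linearIndependent l).ne_zero m (by rw [h, mulVec_zero])

theorem span_inv_mulVec_eq {l j : Fin k} (hjl : j ≠ l) (m : Fin α) :
    F ∙ ((A.C m j)⁻¹ *ᵥ A.u l A.m₀) = F ∙ A.u l m :=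
  span_singleton_inv_mulVec_eq (A.isUnit_det_C m j) (A.u_ne_zero l m) (A.mulVec_mem_span l j m hjl)

theorem transfer_mulVec_mem_span {l j j' : Fin k} (hjl : j ≠ l) (hj'l : j' ≠ l) (m : Fin α) :
    (A.C m j' * (A.C m j)⁻¹) *ᵥ A.u l A.m₀ ∈ F ∙ A.u l A.m₀ := by
  have h : (A.C m j)⁻¹ *ᵥ A.u l A.m₀ ∈ F ∙ A.u l m := by
    rw [← A.span_inv_mulVec_eq hjl m]
    exact mem_span_singleton_self _
  obtain ⟨a, ha⟩ := mem_span_singleton.mp h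
  rw [← mulVec_mulVec, ← ha, mulVec_smul]
  exact smul_mem _ _ (A.mulVec_mem_span l j' m hj'l)

theorem mulVec_u_mem_span_transfer {l j : Fin k} (hjl : j ≠ l) (m : Fin α) :
    A.C m l *ᵥ A.u l m ∈ F ∙ ((A.C m l * (A.C m j)⁻¹) *ᵥ A.u l A.m₀) := by
  have h : A.u l m ∈ F ∙ ((A.C m j)⁻¹ *ᵥ A.u l A.m₀) := by
    rw [A.span_inv_mulVec_eq hjl m]
    exact mem_span_singleton_self _
  obtain ⟨a, ha⟩ := mem_span_singleton.mp h
  rw [← ha, mulVec_smul, mulVec_mulVec]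
  exact smul_mem _ _ (mem_span_singleton_self _)

/-- Transferring through `j ∉ S` carries the `α` independent components along `l` into the span
of the directions of `S`. -/
theorem card_le_of_mem_span {S : Finset (Fin k)} {l j : Fin k} (hl : l ∉ S) (hj : j ∉ S)
    (hjl : j ≠ l) (h : A.u l A.m₀ ∈ span F ((fun i => A.u i A.m₀) '' S)) : α ≤ #S := by
  classical
  set W := span F ((fun i => A.u i A.m₀) '' S)
  have hrange : Set.range (fun m => A.C m l *ᵥ A.u l m) ⊆ W := by
    rintro _ ⟨m, rfl⟩
    have hW : W ≤ W.comap (mulVecLin (A.C m l * (A.C m j)⁻¹)) := span_le.mpr <| by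
      rintro _ ⟨i, hi, rfl⟩
      exact (span_singleton_le_iff_mem _ _).mpr (subset_span (Set.mem_image_of_mem _ hi))
        (A.transfer_mulVec_mem_span (by rintro rfl; exact hj hi) (by rintro rfl; exact hl hi) m)
    exact (span_singleton_le_iff_mem _ W).mpr (hW h) (A.mulVec_u_mem_span_transfer hjl m)
  have := linearIndependent_le_span' _ (A.linearIndependent l) (↑(S.image fun i => A.u i A.m₀))
    (by rwa [coe_image])
  simp only [Cardinal.mk_fintype, Fintype.card_fin, coe_sort_coe, Fintype.card_coe,
    Nat.cast_le] at this
  exact this.trans card_image_le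

theorem linearIndepOn_of_card_le (hk : α < k) {S : Finset (Fin k)} (hS : #S ≤ α) :
    LinearIndepOn F (fun i => A.u i A.m₀) S := by
  rw [linearIndepOn_iff_notMem_span]
  intro l hl hspan
  obtain ⟨j, -, hj⟩ := exists_mem_notMem_of_card_lt_card
    (by rw [card_univ, Fintype.card_fin]; omega : #S < #(univ : Finset (Fin k)))
  have := A.card_le_of_mem_span (notMem_erase l S) (fun h => hj (mem_of_mem_erase h))
    (by rintro rfl; exact hj hl) (by rwa [coe_erase])
  rw [card_erase_of_mem hl] at this
  have := card_pos.mpr ⟨l, hl⟩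
  omega

theorem isEmpty (hα : 2 ≤ α) (hk : α + 3 ≤ k) : IsEmpty (AlignedRepair F k α) := by
  refine ⟨fun A => ?_⟩
  have : Nontrivial (Fin α) := Fin.nontrivial_iff_two_le.mpr hα
  obtain ⟨m₁, hm₁⟩ := exists_ne A.m₀
  let j₁ : Fin k := ⟨0, by omega⟩
  let j₂ : Fin k := ⟨1, by omega⟩
  have hj₁₂ : j₁ ≠ j₂ := by simp [j₁, j₂, Fin.ext_iff]
  obtain ⟨μ, hμ⟩ := Module.End.exists_eq_smul_one_of_linearIndepOn_of_mem_span_singleton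
    (f := mulVecLin (A.C m₁ j₂ * (A.C m₁ j₁)⁻¹)) (v := fun i => A.u i A.m₀) (T := {j₁, j₂}ᶜ)
    (by rw [finrank_fin_fun, card_compl, card_pair hj₁₂, Fintype.card_fin]; omega)
    (fun S _ hS => A.linearIndepOn_of_card_le (by omega) (by rwa [finrank_fin_fun] at hS))
    (fun i hi => by
      rw [mem_compl, mem_insert, mem_singleton, not_or] at hi
      exact A.transfer_mulVec_mem_span (Ne.symm hi.1) (Ne.symm hi.2) m₁)
  have h₁ := A.mulVec_u_mem_span_transfer hj₁₂ m₁
  rw [show (A.C m₁ j₂ * (A.C m₁ j₁)⁻¹) *ᵥ A.u j₂ A.m₀ = μ • A.u j₂ A.m₀ from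
    LinearMap.congr_fun hμ _] at h₁
  have h₂ : A.C m₁ j₂ *ᵥ A.u j₂ m₁ ∈ F ∙ (A.C A.m₀ j₂ *ᵥ A.u j₂ A.m₀) := by
    rw [A.C_m₀, one_mulVec]
    exact span_singleton_smul_le _ _ _ h₁
  exact (A.linearIndependent j₂).notMem_span_image (s := {A.m₀}) (by simpa using hm₁)
    (by simpa using h₂)

end AlignedRepair

namespace MSRCode

variable {F : Type*} [Field F] {k α s : ℕ}

def block (c : MSRCode F k α s) (p : Fin s) (j : Fin k) : Matrix (Fin α) (Fin α) F :=
  of fun i t => c.G (Sum.inr p) i (j, t)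

theorem vecMul_G_inl (c : MSRCode F k α s) (p : Fin k) (v : Fin α → F) (j : Fin k) (t : Fin α) :
    (v ᵥ* c.G (Sum.inl p)) (j, t) = if j = p then v t else 0 := by
  by_cases h : j = p <;> simp [vecMul, dotProduct, c.systematic, h]

theorem isUnit_det_block (c : MSRCode F k α s) (p : Fin s) (j : Fin k) :
    IsUnit (c.block p j).det := by
  classical
  rw [isUnit_iff_ne_zero]
  intro hdet
  obtain ⟨v, hv, hAv⟩ := exists_mulVec_eq_zero_iff.mpr hdet
  let f : Fin k → Fin k ⊕ Fin s := fun q => if q = j then Sum.inr p else Sum.inl q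
  have hf : Function.Injective f := by
    intro a b hab
    simp only [f] at hab
    split_ifs at hab <;> simp_all
  -- the columns of node `j` in the stacked matrix vanish outside the block of node `p`
  refine (c.reconstruction f hf).ne_zero (exists_mulVec_eq_zero_iff.mp
    ⟨fun q => if q.1 = j then v q.2 else 0,
      fun h => hv (funext fun t => by simpa using congrFun h (j, t)), ?_⟩)
  ext ⟨q, i⟩
  by_cases hq : q = j
  · subst hq
    simpa [f, mulVec, dotProduct, Fintype.sum_prod_type, block] using congrFun hAv i
  · refine sum_eq_zero fun ⟨j', t⟩ _ => ?_
    by_cases hj' : j' = j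
    · simp [f, hq, hj', c.systematic, Ne.symm hq]
    · simp [hj']

theorem exists_aligned_repair (c : MSRCode F k α s) (ι : Fin α ↪ Fin s) (l : Fin k) :
    ∃ (u : Fin α → Fin α → F) (x : Fin k → Fin α → F),
      (∀ j ≠ l, ∀ m, u m ᵥ* c.block (ι m) j ∈ F ∙ x j) ∧
      LinearIndependent F fun m => u m ᵥ* c.block (ι m) l := by
  obtain ⟨x, Y, hrep⟩ := c.regeneration l ((univ.erase l).disjSum (univ.map ι))
    (by simp [card_disjSum]; have := l.pos; omega) (by simp)
  let Yh : Matrix (Fin α) (Fin α) F := of fun i m => Y i (Sum.inr (ι m))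
  let V (j : Fin k) : Matrix (Fin α) (Fin α) F := of fun m => x (Sum.inr (ι m)) ᵥ* c.block (ι m) j
  have hblock : ∀ i j t, c.G (Sum.inl l) i (j, t) =
      (if j = l then 0 else Y i (Sum.inl j) * x (Sum.inl j) t) + (Yh * V j) i t := by
    intro i j t
    rw [hrep, sum_disjSum, sum_map]
    congr 1
    change ∑ p ∈ univ.erase l, Y i (Sum.inl p) * (x (Sum.inl p) ᵥ* c.G (Sum.inl p)) (j, t) = _
    simp only [c.vecMul_G_inl, mul_ite, mul_zero]
    split_ifs with hjl
    · exact sum_eq_zero fun p hp => if_neg fun hjp => by simp [← hjp, hjl] at hp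
    · rw [sum_ite_eq, if_pos (mem_erase.mpr ⟨hjl, mem_univ j⟩)]
  have hl : Yh * V l = 1 := by
    ext i t
    have := hblock i l t
    rw [c.systematic, if_pos rfl, zero_add] at this
    rw [← this, one_apply]
    simp [eq_comm]
  have hj : ∀ j ≠ l, Yh * V j = vecMulVec (fun i => -Y i (Sum.inl j)) (x (Sum.inl j)) := by
    intro j hjl
    ext i t
    have := hblock i j t
    rw [c.systematic, if_neg (fun h => hjl h.1), if_neg hjl] at this
    rw [vecMulVec_apply]
    linear_combination -this
  exact ⟨fun m => x (Sum.inr (ι m)), fun j => x (Sum.inl j),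
    fun j hjl => row_mem_span_singleton_of_mul_eq_vecMulVec hl (hj j hjl),
    linearIndependent_rows_of_det_ne_zero (isUnit_det_of_left_inverse hl).ne_zero⟩

/-- Normalising the helpers' components by those of helper `m₀` puts the code in canonical form. -/
theorem nonempty_alignedRepair (c : MSRCode F k α s) (ι : Fin α ↪ Fin s) (m₀ : Fin α) :
    Nonempty (AlignedRepair F k α) := by
  classical
  choose u x hx hu using c.exists_aligned_repair ι
  let B (m : Fin α) (j : Fin k) : Matrix (Fin α) (Fin α) F := (c.block (ι m) j)ᵀ
  have hB : ∀ m j, IsUnit (B m j).det := fun m j => by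
    simpa only [B, det_transpose] using c.isUnit_det_block (ι m) j
  refine ⟨⟨fun m j => (B m₀ j)⁻¹ * B m j, u, m₀, fun m j => ?_,
    fun j => nonsing_inv_mul _ (hB m₀ j), fun l j m hjl => ?_, fun l => ?_⟩⟩
  · rw [det_mul]
    exact (isUnit_nonsing_inv_det _ (hB m₀ j)).mul (hB m j)
  · have hu₀ : u l m₀ ≠ 0 := fun h => (hu l).ne_zero m₀ (by rw [h, zero_vecMul])
    have hx₀ : B m₀ j *ᵥ u l m₀ ∈ F ∙ x l j := by
      rw [mulVec_transpose]
      exact hx l j hjl m₀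
    rw [← span_singleton_inv_mulVec_eq (hB m₀ j) hu₀ hx₀]
    obtain ⟨a, ha⟩ := mem_span_singleton.mp (hx l j hjl m)
    rw [← mulVec_mulVec, mulVec_transpose, ← ha, mulVec_smul]
    exact smul_mem _ _ (mem_span_singleton_self _)
  · have hinj : Function.Injective (B m₀ l)⁻¹.mulVec :=
      mulVec_injective_iff_isUnit.mpr <|
        isUnit_nonsing_inv_iff.mpr ((isUnit_iff_isUnit_det _).mpr (hB m₀ l))
    simp_rw [← mulVec_mulVec, B, mulVec_transpose]
    exact (hu l).map' (mulVecLin (B m₀ l)⁻¹) (LinearMap.ker_eq_bot.mpr hinj)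

end MSRCode

theorem statement16_general {F : Type*} [Field F] (k α s : ℕ)
    (hα : 2 ≤ α) (hk : α + 3 ≤ k) (hs : α ≤ s) :
    IsEmpty (MSRCode F k α s) :=
  ⟨fun c => (c.nonempty_alignedRepair (Fin.castLEEmb hs) ⟨0, by omega⟩).elim
    (AlignedRepair.isEmpty hα hk).false⟩

/-- Non-achievability for `k ≥ α + 3`: for `α ≥ 2` and `k ≥ α + 3` there is no linear
exact-regenerating code over any finite field with `B = kα`, per-node storage `α`,
`β = 1`, and `d = α + k - 1` that exactly regenerates all systematic nodes
(with at least `α` non-systematic nodes, so that helper sets exist). -/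
theorem statement16 {F : Type*} [Field F] [Fintype F] (k α s : ℕ)
    (hα : 2 ≤ α) (hk : α + 3 ≤ k) (hs : α ≤ s) :
    IsEmpty (MSRCode F k α s) :=
  statement16_general k α s hα hk hs
end
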